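/- arXiv:2311.01892 — 9 statements merged into one kernel-verified Lean document; each statement's English description precedes it below -/
import Mathlib

section
/- Let F be an ordered field and b ∈ F a big element (b > 0 and for every a ∈ F there exists m ∈ ℕ, m ≥ 1, with a < b^m). Then for every a ∈ F with a > 0, the sets A_a = {m/n ∈ ℚ : n ≥ 1, b^m ≤ a^n} and B_a = {m'/n' ∈ ℚ : n' ≥ 1, b^{m'} ≥ a^{n'}} form a Dedekind cut of ℚ, i.e. A_a ∪ B_a = ℚ, every element of A_a minus its supremum candidate is ≤ every element of B_a (formally: for p ∈ A_a and q ∈ B_a, p ≤ q). -/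
/-- If `b` is a big element of an ordered field `F` (positive, and every element of `F` is
bounded above by some positive power of `b`), then for every `a > 0` the sets
`A_a = {m/n : n ≥ 1, b^m ≤ a^n}` and `B_a = {m'/n' : n' ≥ 1, b^{m'} ≥ a^{n'}}` form a
Dedekind cut of `ℚ`: together they cover `ℚ`, and every element of `A_a` is `≤` every
element of `B_a`. -/
theorem stmt_2 {F : Type*} [Field F] [LinearOrder F] [IsStrictOrderedRing F] (b : F) (hb : 0 < b)
    (hbig : ∀ a : F, ∃ m : ℕ, 1 ≤ m ∧ a < b ^ m)
    (a : F) (ha : 0 < a) :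
    (∀ q : ℚ,
      (∃ (m : ℤ) (n : ℕ), 0 < n ∧ q = (m : ℚ) / (n : ℚ) ∧ b ^ m ≤ a ^ n) ∨
      (∃ (m : ℤ) (n : ℕ), 0 < n ∧ q = (m : ℚ) / (n : ℚ) ∧ a ^ n ≤ b ^ m)) ∧
    (∀ p q : ℚ,
      (∃ (m : ℤ) (n : ℕ), 0 < n ∧ p = (m : ℚ) / (n : ℚ) ∧ b ^ m ≤ a ^ n) →
      (∃ (m : ℤ) (n : ℕ), 0 < n ∧ q = (m : ℚ) / (n : ℚ) ∧ a ^ n ≤ b ^ m) →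
      p ≤ q) := by
  have hb1 : 1 < b := by
    by_contra h
    push_neg at h
    obtain ⟨m, hm1, hmb⟩ := hbig b
    have : b ^ m ≤ b ^ 1 := pow_le_pow_of_le_one hb.le h hm1
    simp at this
    exact absurd hmb (not_lt.mpr this)
  constructor
  · intro q
    rcases le_total (b ^ q.num) (a ^ q.den) with h | h
    · exact Or.inl ⟨q.num, q.den, q.pos, by exact_mod_cast (Rat.num_div_den q).symm, h⟩
    · exact Or.inr ⟨q.num, q.den, q.pos, by exact_mod_cast (Rat.num_div_den q).symm, h⟩
  · rintro p q ⟨m, n, hn, rfl, hA⟩ ⟨m', n', hn', rfl, hB⟩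
    have hbm : (0:F) < b ^ m := zpow_pos hb m
    have hbm' : (0:F) < b ^ m' := zpow_pos hb m'
    have h1 : b ^ (m * n') ≤ a ^ (n * n') := by
      calc b ^ (m * n') = (b ^ m) ^ n' := by
            rw [zpow_mul, zpow_natCast]
        _ ≤ (a ^ n) ^ n' := pow_le_pow_left₀ hbm.le hA n'
        _ = a ^ (n * n') := (pow_mul a n n').symm
    have h2 : a ^ (n * n') ≤ b ^ (m' * n) := by
      calc a ^ (n * n') = (a ^ n') ^ n := by rw [← pow_mul, Nat.mul_comm]
        _ ≤ (b ^ m') ^ n := pow_le_pow_left₀ (pow_nonneg ha.le n') hB n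
        _ = b ^ (m' * n) := by rw [zpow_mul, zpow_natCast]
    have h3 : b ^ (m * (n':ℤ)) ≤ b ^ (m' * (n:ℤ)) := by
      have := h1.trans h2
      rw [show (m * (n':ℤ)) = m * n' by push_cast; ring,
        show (m' * (n:ℤ)) = m' * n by push_cast; ring]
      exact_mod_cast this
    have h4 : m * (n':ℤ) ≤ m' * (n:ℤ) := (zpow_le_zpow_iff_right₀ hb1).mp h3
    rw [div_le_div_iff₀ (by exact_mod_cast hn) (by exact_mod_cast hn')]
    exact_mod_cast h4
end

section
/- Let F be an ordered field with a big element b > 1, and define log_b : F_{>0} → ℝ via the Dedekind cut determined by A_a and B_a. Then the map v_b(a) := −log_b(|a|) for a ≠ 0 satisfies: v_b(xy) = v_b(x) + v_b(y) for all nonzero x, y, and v_b is order compatible: if 0 < x ≤ y then v_b(x) ≥ v_b(y). -/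
/-- The logarithm with base a big element `b`, defined via the Dedekind cut of rationals
with lower set `{m/n : n ≥ 1, b^m ≤ a^n}`. -/
noncomputable def logCut {F : Type*} [Field F] [LinearOrder F] [IsStrictOrderedRing F] (b a : F) : ℝ :=
  sSup {r : ℝ | ∃ (m : ℤ) (n : ℕ), 0 < n ∧ r = (m : ℝ) / (n : ℝ) ∧ b ^ m ≤ a ^ n}

namespace LogCutAux

variable {F : Type*} [Field F] [LinearOrder F] [IsStrictOrderedRing F]

def logSet (b a : F) : Set ℝ :=
  {r : ℝ | ∃ (m : ℤ) (n : ℕ), 0 < n ∧ r = (m : ℝ) / (n : ℝ) ∧ b ^ m ≤ a ^ n}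

lemma logCut_eq (b a : F) : logCut b a = sSup (logSet b a) := rfl

lemma mem_logSet {b a : F} {m : ℤ} {n : ℕ} (hn : 0 < n) (h : b ^ m ≤ a ^ n) :
    ((m : ℝ) / (n : ℝ)) ∈ logSet b a := ⟨m, n, hn, rfl, h⟩

lemma logSet_nonempty {b a : F} (hb : 1 < b)
    (hbig : ∀ a : F, ∃ m : ℕ, 1 ≤ m ∧ a < b ^ m) (ha : 0 < a) :
    (logSet b a).Nonempty := by
  obtain ⟨k, hk1, hk⟩ := hbig a⁻¹
  have hb0 : (0:F) < b := lt_trans zero_lt_one hb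
  have hbk : (0:F) < b ^ k := pow_pos hb0 k
  have h1 : b ^ (-(k:ℤ)) ≤ a := by
    rw [zpow_neg, zpow_natCast]
    have := inv_strictAnti₀ (inv_pos.mpr ha) hk
    rw [inv_inv] at this
    exact this.le
  exact ⟨_, mem_logSet one_pos (by rw [pow_one]; exact h1)⟩

lemma zpow_lt_zpow_iff' {b : F} (hb : 1 < b) {m k : ℤ} : b ^ m < b ^ k ↔ m < k :=
  zpow_lt_zpow_iff_right₀ hb

lemma logSet_bddAbove {b a : F} (hb : 1 < b)
    (hbig : ∀ a : F, ∃ m : ℕ, 1 ≤ m ∧ a < b ^ m) (ha : 0 < a) :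
    BddAbove (logSet b a) := by
  obtain ⟨M, hM1, hM⟩ := hbig a
  refine ⟨(M : ℝ), ?_⟩
  rintro r ⟨m, n, hn, rfl, h⟩
  have h2 : a ^ n < b ^ ((M * n : ℕ) : ℤ) := by
    rw [zpow_natCast, pow_mul]
    exact pow_lt_pow_left₀ hM ha.le hn.ne'
  have h3 : m < ((M * n : ℕ) : ℤ) := (zpow_lt_zpow_iff' hb).mp (lt_of_le_of_lt h h2)
  have hnR : (0:ℝ) < (n:ℝ) := by exact_mod_cast hn
  rw [div_le_iff₀ hnR]
  have : (m:ℝ) < (M:ℝ) * n := by exact_mod_cast h3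
  exact this.le

/-- greatest integer p with b^p ≤ a -/
lemma exists_floor {b a : F} (hb : 1 < b)
    (hbig : ∀ a : F, ∃ m : ℕ, 1 ≤ m ∧ a < b ^ m) (ha : 0 < a) :
    ∃ p : ℤ, b ^ p ≤ a ∧ a < b ^ (p + 1) := by
  have hb0 : (0:F) < b := lt_trans zero_lt_one hb
  obtain ⟨M, hM1, hM⟩ := hbig a
  obtain ⟨k, hk1, hk⟩ := hbig a⁻¹
  have hne : b ^ (-(k:ℤ)) ≤ a := by
    rw [zpow_neg, zpow_natCast]
    have := inv_strictAnti₀ (inv_pos.mpr ha) hk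
    rw [inv_inv] at this
    exact this.le
  have hbdd : ∀ p : ℤ, b ^ p ≤ a → p ≤ (M : ℤ) := by
    intro p hp
    have : b ^ p < b ^ ((M:ℕ) : ℤ) := lt_of_le_of_lt hp (by rwa [zpow_natCast])
    exact ((zpow_lt_zpow_iff' hb).mp this).le
  obtain ⟨p, hp, hpmax⟩ := Int.exists_greatest_of_bdd ⟨(M:ℤ), fun z hz => hbdd z hz⟩
    ⟨-(k:ℤ), hne⟩
  refine ⟨p, hp, ?_⟩
  by_contra hcon
  push_neg at hcon
  exact absurd (hpmax (p+1) hcon) (by omega)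

lemma le_logCut {b a : F} (hb : 1 < b)
    (hbig : ∀ a : F, ∃ m : ℕ, 1 ≤ m ∧ a < b ^ m) (ha : 0 < a)
    {m : ℤ} {n : ℕ} (hn : 0 < n) (h : b ^ m ≤ a ^ n) :
    (m : ℝ) / (n : ℝ) ≤ logCut b a :=
  le_csSup (logSet_bddAbove hb hbig ha) (mem_logSet hn h)

lemma logCut_mono {b x y : F} (hb : 1 < b)
    (hbig : ∀ a : F, ∃ m : ℕ, 1 ≤ m ∧ a < b ^ m) (hx : 0 < x) (hxy : x ≤ y) :
    logCut b x ≤ logCut b y := by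
  have hy : 0 < y := lt_of_lt_of_le hx hxy
  apply csSup_le_csSup (logSet_bddAbove hb hbig hy) (logSet_nonempty hb hbig hx)
  rintro r ⟨m, n, hn, rfl, h⟩
  exact ⟨m, n, hn, rfl, h.trans (pow_le_pow_left₀ hx.le hxy n)⟩

lemma logCut_add {b x y : F} (hb : 1 < b)
    (hbig : ∀ a : F, ∃ m : ℕ, 1 ≤ m ∧ a < b ^ m) (hx : 0 < x) (hy : 0 < y) :
    logCut b (x * y) = logCut b x + logCut b y := by
  have hb0 : (0:F) < b := lt_trans zero_lt_one hb
  have hxy : 0 < x * y := mul_pos hx hy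
  apply le_antisymm
  · -- every element of logSet (x*y) is ≤ sum
    rw [logCut_eq]
    apply csSup_le (logSet_nonempty hb hbig hxy)
    rintro r ⟨m, n, hn, rfl, h⟩
    -- show m/n ≤ logCut x + logCut y
    by_contra hcon
    push_neg at hcon
    obtain ⟨k, hk⟩ := exists_nat_gt (2 / ((m:ℝ)/n - (logCut b x + logCut b y)))
    have hdpos : (0:ℝ) < (m:ℝ)/n - (logCut b x + logCut b y) := sub_pos.mpr hcon
    have hk0 : 0 < k := by
      by_contra hk0
      push_neg at hk0
      interval_cases k
      simp at hk
      exact absurd hk (not_lt.mpr (by positivity))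
    obtain ⟨p, hp, hp1⟩ := exists_floor hb hbig (pow_pos hx k)
    obtain ⟨q, hq, hq1⟩ := exists_floor hb hbig (pow_pos hy k)
    have hpx : (p:ℝ)/k ≤ logCut b x := le_logCut hb hbig hx hk0 hp
    have hqy : (q:ℝ)/k ≤ logCut b y := le_logCut hb hbig hy hk0 hq
    -- (x*y)^k < b^(p+q+2)
    have hlt : (x*y) ^ k < b ^ (p + q + 2) := by
      rw [mul_pow]
      calc x ^ k * y ^ k < b ^ (p+1) * b ^ (q+1) :=
            mul_lt_mul'' hp1 hq1 (pow_pos hx k).le (pow_pos hy k).le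
        _ = b ^ (p + q + 2) := by rw [← zpow_add₀ hb0.ne']; ring_nf
    -- b^(m*k) ≤ ((x*y)^n)^k = ((x*y)^k)^n < b^((p+q+2)*n)
    have key : m * (k:ℤ) < (p + q + 2) * n := by
      apply (zpow_lt_zpow_iff' hb).mp
      calc b ^ (m * (k:ℤ)) = (b ^ m) ^ k := by rw [zpow_mul, zpow_natCast]
        _ ≤ ((x*y) ^ n) ^ k := pow_le_pow_left₀ (zpow_pos hb0 m).le h k
        _ = ((x*y) ^ k) ^ n := by rw [← pow_mul, Nat.mul_comm, pow_mul]
        _ < (b ^ (p+q+2)) ^ n := pow_lt_pow_left₀ hlt (pow_pos hxy k).le hn.ne'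
        _ = b ^ ((p + q + 2) * (n:ℤ)) := by rw [zpow_mul, zpow_natCast]
    -- translate to reals
    have hnR : (0:ℝ) < (n:ℝ) := by exact_mod_cast hn
    have hkR : (0:ℝ) < (k:ℝ) := by exact_mod_cast hk0
    have hmn : (m:ℝ)/n < ((p:ℝ) + q + 2) / k := by
      rw [div_lt_div_iff₀ hnR hkR]
      have : (m:ℝ) * k < ((p:ℝ) + q + 2) * n := by exact_mod_cast key
      linarith
    have hsum : ((p:ℝ) + q + 2) / k ≤ logCut b x + logCut b y + 2 / k := by
      have : ((p:ℝ) + q + 2)/k = (p:ℝ)/k + (q:ℝ)/k + 2/k := by ring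
      rw [this]
      linarith
    have h2k : 2 / (k:ℝ) < (m:ℝ)/n - (logCut b x + logCut b y) := by
      rw [div_lt_iff₀ hkR]
      rw [div_lt_iff₀ hdpos] at hk
      nlinarith
    linarith
  · -- sum of members is a member
    have hstep : ∀ r1 ∈ logSet b x, ∀ r2 ∈ logSet b y, r1 + r2 ≤ logCut b (x*y) := by
      rintro r1 ⟨m1, n1, hn1, rfl, h1⟩ r2 ⟨m2, n2, hn2, rfl, h2⟩
      have hmem : b ^ (m1 * n2 + m2 * n1) ≤ (x*y) ^ (n1 * n2) := by
        rw [zpow_add₀ (by positivity : b ≠ 0), mul_pow]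
        apply mul_le_mul
        · calc b ^ (m1 * (n2:ℤ)) = (b ^ m1) ^ n2 := by rw [zpow_mul, zpow_natCast]
            _ ≤ (x ^ n1) ^ n2 := pow_le_pow_left₀ (zpow_pos (by positivity) m1).le h1 n2
            _ = x ^ (n1 * n2) := by rw [← pow_mul]
        · calc b ^ (m2 * (n1:ℤ)) = (b ^ m2) ^ n1 := by rw [zpow_mul, zpow_natCast]
            _ ≤ (y ^ n2) ^ n1 := pow_le_pow_left₀ (zpow_pos (by positivity) m2).le h2 n1
            _ = y ^ (n1 * n2) := by rw [← pow_mul, Nat.mul_comm]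
        · positivity
        · positivity
      have := le_logCut hb hbig hxy (Nat.mul_pos hn1 hn2) hmem
      have heq : ((m1 * n2 + m2 * n1 : ℤ):ℝ) / ((n1*n2 : ℕ):ℝ) = (m1:ℝ)/n1 + (m2:ℝ)/n2 := by
        have hn1R : ((n1:ℝ)) ≠ 0 := by positivity
        have hn2R : ((n2:ℝ)) ≠ 0 := by positivity
        push_cast
        field_simp
      rwa [heq] at this
    have h1 : ∀ r1 ∈ logSet b x, r1 + logCut b y ≤ logCut b (x*y) := by
      intro r1 hr1
      have : logCut b y ≤ logCut b (x*y) - r1 := by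
        apply csSup_le (logSet_nonempty hb hbig hy)
        intro r2 hr2
        linarith [hstep r1 hr1 r2 hr2]
      linarith
    have : logCut b x ≤ logCut b (x*y) - logCut b y := by
      apply csSup_le (logSet_nonempty hb hbig hx)
      intro r1 hr1
      linarith [h1 r1 hr1]
    linarith

end LogCutAux

/-- For an ordered field `F` with big element `b > 1`, the map `v_b(a) = -log_b |a|`
is multiplicative-to-additive on nonzero elements and order compatible:
if `0 < x ≤ y` then `v_b(x) ≥ v_b(y)`. -/
theorem stmt_3 {F : Type*} [Field F] [LinearOrder F] [IsStrictOrderedRing F] (b : F) (hb : 1 < b)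
    (hbig : ∀ a : F, ∃ m : ℕ, 1 ≤ m ∧ a < b ^ m) :
    (∀ x y : F, x ≠ 0 → y ≠ 0 →
      -logCut b |x * y| = -logCut b |x| + -logCut b |y|) ∧
    (∀ x y : F, 0 < x → x ≤ y → -logCut b y ≤ -logCut b x) := by

  constructor
  · intro x y hx hy
    rw [abs_mul, LogCutAux.logCut_add hb hbig (abs_pos.mpr hx) (abs_pos.mpr hy)]
    ring
  · intro x y hx hxy
    exact neg_le_neg (LogCutAux.logCut_mono hb hbig hx hxy)
end

section
/- If F is a non-Archimedean ordered field (some element exceeds every natural number) with a multiplicative absolute-value-like function ‖·‖ : F → ℝ satisfying ‖x‖ ≥ 0 with equality iff x = 0, ‖xy‖ = ‖x‖‖y‖, ‖x+y‖ ≤ ‖x‖+‖y‖, and order compatibility (0 ≤ x ≤ y implies ‖x‖ ≤ ‖y‖), then ‖n‖ = 1 for every positive integer n, and ‖·‖ satisfies the ultrametric inequality ‖x+y‖ ≤ max(‖x‖, ‖y‖). -/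
/-- If `F` is a non-Archimedean ordered field with a multiplicative, order compatible,
real-valued absolute-value-like function `N`, then `N n = 1` for every positive integer
`n`, and `N` satisfies the ultrametric inequality. -/
theorem stmt_4 {F : Type*} [Field F] [LinearOrder F] [IsStrictOrderedRing F]
    (hna : ∃ t : F, ∀ n : ℕ, (n : F) < t)
    (N : F → ℝ)
    (hpos : ∀ x : F, 0 ≤ N x)
    (hzero : ∀ x : F, N x = 0 ↔ x = 0)
    (hmul : ∀ x y : F, N (x * y) = N x * N y)
    (htri : ∀ x y : F, N (x + y) ≤ N x + N y)
    (hord : ∀ x y : F, 0 ≤ x → x ≤ y → N x ≤ N y) :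
    (∀ n : ℕ, 0 < n → N (n : F) = 1) ∧
    (∀ x y : F, N (x + y) ≤ max (N x) (N y)) := by
  obtain ⟨t, ht⟩ := hna
  -- N 1 = 1
  have hone : N 1 = 1 := by
    have h1 : N 1 * N 1 = N 1 := by rw [← hmul]; norm_num
    have h0 : N 1 ≠ 0 := fun h => one_ne_zero ((hzero 1).mp h)
    field_simp at h1
    tauto
  -- N (x ^ k) = N x ^ k
  have hpow : ∀ (x : F) (k : ℕ), N (x ^ k) = N x ^ k := by
    intro x k
    induction k with
    | zero => simpa using hone
    | succ k ih => rw [pow_succ, pow_succ, hmul, ih]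
  -- N n ≤ 1 for every natural n
  have hle : ∀ n : ℕ, N (n : F) ≤ 1 := by
    intro n
    by_contra h
    push_neg at h
    obtain ⟨k, hk⟩ := pow_unbounded_of_one_lt (N t) h
    have h1 : ((n : F)) ^ k ≤ t := by
      have := ht (n ^ k)
      push_cast at this
      exact this.le
    have h2 : N ((n : F) ^ k) ≤ N t := hord _ _ (by positivity) h1
    rw [hpow] at h2
    linarith
  -- N n = 1 for positive n
  have hnat : ∀ n : ℕ, 0 < n → N (n : F) = 1 := by
    intro n hn
    have h1 : (1 : F) ≤ (n : F) := by exact_mod_cast hn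
    have := hord 1 (n : F) zero_le_one h1
    rw [hone] at this
    exact le_antisymm (hle n) this
  refine ⟨hnat, ?_⟩
  -- sum triangle inequality
  have hsum : ∀ (s : Finset ℕ) (f : ℕ → F), N (∑ i ∈ s, f i) ≤ ∑ i ∈ s, N (f i) := by
    intro s f
    induction s using Finset.induction with
    | empty => simp [(hzero 0).mpr rfl]
    | insert _ _ hns ih =>
      rw [Finset.sum_insert hns, Finset.sum_insert hns]
      exact (htri _ _).trans (by linarith)
  intro x y
  set M : ℝ := max (N x) (N y) with hM
  have hMnn : 0 ≤ M := le_trans (hpos x) (le_max_left _ _)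
  -- key inequality: N (x + y) ^ m ≤ (m + 1) * M ^ m
  have key : ∀ m : ℕ, N (x + y) ^ m ≤ (m + 1) * M ^ m := by
    intro m
    rw [← hpow]
    rw [add_pow]
    calc N (∑ k ∈ Finset.range (m + 1), x ^ k * y ^ (m - k) * (m.choose k : F))
        ≤ ∑ k ∈ Finset.range (m + 1), N (x ^ k * y ^ (m - k) * (m.choose k : F)) :=
          hsum _ _
      _ ≤ ∑ k ∈ Finset.range (m + 1), M ^ m := by
          refine Finset.sum_le_sum fun i hi => ?_
          rw [Finset.mem_range, Nat.lt_succ] at hi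
          rw [hmul, hmul, hpow, hpow]
          have h1 : N x ^ i ≤ M ^ i :=
            pow_le_pow_left₀ (hpos x) (le_max_left _ _) i
          have h2 : N y ^ (m - i) ≤ M ^ (m - i) :=
            pow_le_pow_left₀ (hpos y) (le_max_right _ _) _
          have h3 : N ((m.choose i : ℕ) : F) ≤ 1 := hle _
          calc N x ^ i * N y ^ (m - i) * N ((m.choose i : ℕ) : F)
              ≤ M ^ i * M ^ (m - i) * 1 := by
                apply mul_le_mul _ h3 (hpos _)
                    (mul_nonneg (pow_nonneg hMnn i) (pow_nonneg hMnn _))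
                exact mul_le_mul h1 h2 (pow_nonneg (hpos y) _) (pow_nonneg hMnn i)
            _ = M ^ m := by rw [mul_one, ← pow_add, Nat.add_sub_cancel' hi]
      _ = (m + 1) * M ^ m := by
          rw [Finset.sum_const, Finset.card_range, nsmul_eq_mul]
          push_cast; ring
  -- conclude
  by_contra hcon
  push_neg at hcon
  have ha : 0 < N (x + y) := lt_of_le_of_lt hMnn hcon
  have hMpos : 0 < M := by
    rcases hMnn.eq_or_lt with h | h
    · exfalso
      have hx0 : N x = 0 := le_antisymm (h ▸ le_max_left _ _) (hpos x)
      have hy0 : N y = 0 := le_antisymm (h ▸ le_max_right _ _) (hpos y)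
      have : x + y = 0 := by
        rw [(hzero x).mp hx0, (hzero y).mp hy0, add_zero]
      rw [(hzero _).mpr this] at ha
      exact lt_irrefl _ ha
    · exact h
  have hr : 1 < N (x + y) / M := (one_lt_div hMpos).mpr hcon
  obtain ⟨m, hm⟩ := Real.exists_natCast_add_one_lt_pow_of_one_lt hr
  rw [div_pow, lt_div_iff₀ (by positivity)] at hm
  have := key m
  push_cast at hm
  nlinarith [pow_pos hMpos m]
end

section
/- Let A be a commutative ring, α a prime cone of A with associated order homomorphism φ_α : A → F_α into a real closed field F_α which is the real closure of Frac(A/supp(α)). If F_α is not Archimedean over φ_α(A) (some element of F_α exceeds all elements of φ_α(A)), then there exists a prime cone β with α ⊊ β. Equivalently, if α is a closed point of the real spectrum in the spectral topology, then F_α is Archimedean over φ_α(A). -/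
/-- A prime cone of a commutative ring `A`. -/
structure PrimeCone (A : Type*) [CommRing A] where
  carrier : Set A
  neg_one_not_mem : (-1 : A) ∉ carrier
  add_mem : ∀ x ∈ carrier, ∀ y ∈ carrier, x + y ∈ carrier
  mul_mem : ∀ x ∈ carrier, ∀ y ∈ carrier, x * y ∈ carrier
  total : ∀ x : A, x ∈ carrier ∨ -x ∈ carrier
  support_prime : ∃ P : Ideal A, P.IsPrime ∧ (P : Set A) = {x : A | x ∈ carrier ∧ -x ∈ carrier}

private lemma abs_le_sq_add_one' {F : Type*} [Field F] [LinearOrder F] [IsStrictOrderedRing F] (x : F) : |x| ≤ x ^ 2 + 1 := by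
  rcases abs_cases x with ⟨h, _⟩ | ⟨h, _⟩ <;> nlinarith [sq_nonneg (x - 1), sq_nonneg (x + 1)]

/-- `x` is infinitesimal relative to `φ(A)`. -/
private def Infl {A F : Type*} [CommRing A] [Field F] [LinearOrder F] [IsStrictOrderedRing F] (φ : A →+* F) (x : F) :
    Prop := ∀ c : A, |x * φ c| < 1

section InflLemmas

variable {A F : Type*} [CommRing A] [Field F] [LinearOrder F] [IsStrictOrderedRing F] (φ : A →+* F)

private lemma Infl.zero : Infl φ (0 : F) := fun c => by simpa using (one_pos : (0:F) < 1)

private lemma Infl.mono {x y : F} (h : |x| ≤ |y|) (hy : Infl φ y) : Infl φ x := fun c =>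
  lt_of_le_of_lt (by rw [abs_mul, abs_mul]; exact mul_le_mul_of_nonneg_right h (abs_nonneg _))
    (hy c)

private lemma Infl.neg {x : F} (hx : Infl φ x) : Infl φ (-x) :=
  Infl.mono φ (by rw [abs_neg]) hx

private lemma Infl.add {x y : F} (hx : Infl φ x) (hy : Infl φ y) : Infl φ (x + y) := by
  intro c
  have hx2 := hx (c + c)
  have hy2 := hy (c + c)
  rw [map_add] at hx2 hy2
  have ex : |x * (φ c + φ c)| = 2 * |x * φ c| := by
    rw [show x * (φ c + φ c) = 2 * (x * φ c) by ring, abs_mul, abs_two]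
  have ey : |y * (φ c + φ c)| = 2 * |y * φ c| := by
    rw [show y * (φ c + φ c) = 2 * (y * φ c) by ring, abs_mul, abs_two]
  rw [ex] at hx2
  rw [ey] at hy2
  calc |(x + y) * φ c| = |x * φ c + y * φ c| := by ring_nf
    _ ≤ |x * φ c| + |y * φ c| := abs_add_le _ _
    _ < 1 := by linarith

private lemma Infl.mul_phi {x : F} (r : A) (hx : Infl φ x) : Infl φ (x * φ r) := by
  intro c
  have h := hx (r * c)
  rw [map_mul] at h
  calc |x * φ r * φ c| = |x * (φ r * φ c)| := by rw [mul_assoc]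
    _ < 1 := h

end InflLemmas

/-- Let `α` be a prime cone of `A` given by a homomorphism `φ : A → F` into a real closed
field `F` which is algebraic over (the fraction field of) `φ(A)` (i.e. the real closure of
`Frac(A/supp α)`).  If `F` is not Archimedean over `φ(A)`, then there is a prime cone `β`
strictly containing `α`; equivalently, closed points have `F_α` Archimedean over `φ_α(A)`. -/
theorem stmt_9 {A F : Type*} [CommRing A] [Field F] [LinearOrder F] [IsStrictOrderedRing F]
    (hsq : ∀ x : F, 0 < x → ∃ y : F, y * y = x)
    (hodd : ∀ p : Polynomial F, Odd p.natDegree → ∃ x : F, p.eval x = 0)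
    (φ : A →+* F)
    (halg : ∀ z : F, ∃ p : Polynomial A, p.map φ ≠ 0 ∧ (p.map φ).eval z = 0)
    (α : PrimeCone A) (hα : α.carrier = {a : A | 0 ≤ φ a})
    (hna : ∃ z : F, ∀ a : A, φ a < z) :
    ∃ β : PrimeCone A, α.carrier ⊂ β.carrier := by
  classical
  obtain ⟨z, hz⟩ := hna
  have hz1 : (1 : F) < z := by simpa using hz 1
  have hz0 : (0 : F) < z := lt_trans one_pos hz1
  obtain ⟨p, hp0, hpz⟩ := halg z
  set q := p.map φ with hq
  set n := q.natDegree with hn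
  have hlc : q.coeff n ≠ 0 := by
    simpa [hn, Polynomial.coeff_natDegree] using Polynomial.leadingCoeff_ne_zero.mpr hp0
  -- n ≥ 1
  have hn0 : n ≠ 0 := by
    intro h
    obtain ⟨a0, ha0⟩ := Polynomial.natDegree_eq_zero.mp (hn ▸ h)
    rw [← ha0] at hpz
    rw [Polynomial.eval_C] at hpz
    rw [← ha0, h, Polynomial.coeff_C] at hlc
    simp [hpz] at hlc
  obtain ⟨m, hm⟩ : ∃ m, n = m + 1 := ⟨n - 1, (Nat.succ_pred_eq_of_pos (Nat.pos_of_ne_zero hn0)).symm⟩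
  -- key identity from eval = 0
  have hsum : ∑ i ∈ Finset.range (n + 1), q.coeff i * z ^ i = 0 := by
    rw [← Polynomial.eval_eq_sum_range]; exact hpz
  rw [Finset.sum_range_succ] at hsum
  have hsplit : q.coeff n * z ^ n = -∑ i ∈ Finset.range n, q.coeff i * z ^ i := by linarith
  -- bound: (q.coeff n)^2 * z ≤ S
  set S := ∑ i ∈ Finset.range n, |q.coeff n * q.coeff i| with hS
  have hzm : (0 : F) < z ^ m := pow_pos hz0 m
  have key1 : (q.coeff n) ^ 2 * z ≤ S := by
    have h1 : (q.coeff n) ^ 2 * z * z ^ m =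
        ∑ i ∈ Finset.range n, (-(q.coeff n) * q.coeff i) * z ^ i := by
      have : (q.coeff n) ^ 2 * z * z ^ m = q.coeff n * (q.coeff n * z ^ n) := by
        rw [hm]; ring
      rw [this, hsplit, mul_neg, Finset.mul_sum, ← Finset.sum_neg_distrib]
      exact Finset.sum_congr rfl fun i _ => by ring
    have h2 : ∑ i ∈ Finset.range n, (-(q.coeff n) * q.coeff i) * z ^ i ≤ S * z ^ m := by
      rw [hS, Finset.sum_mul]
      apply Finset.sum_le_sum
      intro i hi
      have hile : i ≤ m := by
        have := Finset.mem_range.mp hi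
        omega
      have hzi : z ^ i ≤ z ^ m := pow_le_pow_right₀ hz1.le hile
      have habs : -(q.coeff n) * q.coeff i ≤ |q.coeff n * q.coeff i| := by
        rw [show -(q.coeff n) * q.coeff i = -(q.coeff n * q.coeff i) by ring]
        exact neg_le_abs _
      calc (-(q.coeff n) * q.coeff i) * z ^ i ≤ |q.coeff n * q.coeff i| * z ^ i :=
            mul_le_mul_of_nonneg_right habs (pow_nonneg hz0.le i)
        _ ≤ |q.coeff n * q.coeff i| * z ^ m :=
            mul_le_mul_of_nonneg_left hzi (abs_nonneg _)
    have h3 : (q.coeff n) ^ 2 * z * z ^ m ≤ S * z ^ m := h1 ▸ h2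
    exact le_of_mul_le_mul_right h3 hzm
  -- transfer to A
  set a : A := ∑ i ∈ Finset.range n, ((p.coeff n * p.coeff i) ^ 2 + 1) with ha
  set b : A := p.coeff n ^ 2 with hb
  have hφb : φ b = (q.coeff n) ^ 2 := by
    rw [hb, map_pow, hq, Polynomial.coeff_map]
  have hb0 : 0 < φ b := by
    rw [hφb]
    exact (sq_nonneg _).lt_of_ne (Ne.symm (pow_ne_zero 2 hlc))
  have hSa : S ≤ φ a := by
    rw [ha, map_sum, hS]
    apply Finset.sum_le_sum
    intro i _
    have hco : q.coeff n * q.coeff i = φ (p.coeff n * p.coeff i) := by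
      rw [map_mul, hq, Polynomial.coeff_map, Polynomial.coeff_map]
    rw [hco, map_add, map_pow, map_one]
    exact abs_le_sq_add_one' _
  have hbz : φ b * z ≤ φ a := by rw [hφb]; exact le_trans key1 hSa
  have ha0 : 0 < φ a := lt_of_lt_of_le (mul_pos hb0 hz0) hbz
  have hkey : ∀ d : A, φ b * φ d < φ a := fun d =>
    lt_of_lt_of_le (mul_lt_mul_of_pos_left (hz d) hb0) hbz
  -- φ b is a nonzero infinitesimal
  have hMb : Infl φ (φ b) := by
    intro c
    by_contra h
    push_neg at h
    have h2 : φ a * 1 ≤ φ a * |φ b * φ c| := mul_le_mul_of_nonneg_left h ha0.le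
    have h3 : φ a * |φ b * φ c| = φ b * |φ (a * c)| := by
      rw [abs_mul, map_mul, abs_mul, abs_of_pos ha0, abs_of_pos hb0]
      ring
    have h4 : |φ (a * c)| ≤ φ ((a * c) ^ 2 + 1) := by
      rw [map_add, map_pow, map_one]
      exact abs_le_sq_add_one' _
    have h5 : φ b * |φ (a * c)| ≤ φ b * φ ((a * c) ^ 2 + 1) :=
      mul_le_mul_of_nonneg_left h4 hb0.le
    have h6 := hkey ((a * c) ^ 2 + 1)
    rw [h3] at h2
    linarith
  -- the prime ideal of infinitesimal elements
  have hInfl_one : ¬ Infl φ (φ (1 : A)) := by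
    intro h
    have := h 1
    simp at this
  let P : Ideal A :=
    { carrier := {x : A | Infl φ (φ x)}
      add_mem' := by
        intro x y hx hy
        simp only [Set.mem_setOf_eq, map_add]
        exact Infl.add φ hx hy
      zero_mem' := by
        simp only [Set.mem_setOf_eq, map_zero]
        exact Infl.zero φ
      smul_mem' := by
        intro r x hx
        simp only [Set.mem_setOf_eq, smul_eq_mul, map_mul]
        rw [mul_comm]
        exact Infl.mul_phi φ r hx }
  have hPmem : ∀ x : A, x ∈ P ↔ Infl φ (φ x) := fun x => Iff.rfl
  have hPprime : P.IsPrime := by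
    constructor
    · rw [Ideal.ne_top_iff_one]
      intro h
      exact hInfl_one ((hPmem 1).mp h)
    · intro x y hxy
      rw [hPmem] at hxy
      by_contra h
      push_neg at h
      obtain ⟨hx, hy⟩ := h
      rw [hPmem] at hx hy
      simp only [Infl, not_forall, not_lt] at hx hy
      obtain ⟨c, hc⟩ := hx
      obtain ⟨d, hd⟩ := hy
      have := hxy (c * d)
      rw [map_mul, map_mul] at this
      have heq : |φ x * φ y * (φ c * φ d)| = |φ x * φ c| * |φ y * φ d| := by
        rw [← abs_mul]; ring_nf
      rw [heq] at this
      nlinarith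
  -- build the prime cone β
  refine ⟨⟨{x : A | 0 ≤ φ x ∨ Infl φ (φ x)}, ?_, ?_, ?_, ?_, ⟨P, hPprime, ?_⟩⟩, ?_⟩
  · -- -1 ∉ carrier
    intro h
    rcases h with h | h
    · rw [map_neg, map_one] at h; linarith
    · rw [map_neg, map_one] at h
      exact hInfl_one (by rw [map_one]; exact Infl.mono φ (by rw [abs_neg]) h)
  · -- add_mem
    intro x hx y hy
    rw [Set.mem_setOf_eq, map_add]
    rcases hx with hx | hx <;> rcases hy with hy | hy
    · exact Or.inl (add_nonneg hx hy)
    · rcases le_or_gt 0 (φ x + φ y) with h | h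
      · exact Or.inl h
      · refine Or.inr (Infl.mono φ ?_ hy)
        rw [abs_of_neg h]
        rcases le_or_gt 0 (φ y) with h' | h'
        · linarith
        · rw [abs_of_neg h']; linarith
    · rcases le_or_gt 0 (φ x + φ y) with h | h
      · exact Or.inl h
      · refine Or.inr (Infl.mono φ ?_ hx)
        rw [abs_of_neg h]
        rcases le_or_gt 0 (φ x) with h' | h'
        · linarith
        · rw [abs_of_neg h']; linarith
    · exact Or.inr (Infl.add φ hx hy)
  · -- mul_mem
    intro x hx y hy
    rw [Set.mem_setOf_eq, map_mul]
    rcases hx with hx | hx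
    · rcases hy with hy | hy
      · exact Or.inl (mul_nonneg hx hy)
      · refine Or.inr ?_
        rw [mul_comm]
        exact Infl.mul_phi φ x hy
    · exact Or.inr (Infl.mul_phi φ y hx)
  · -- total
    intro x
    rcases le_or_gt 0 (φ x) with h | h
    · exact Or.inl (Or.inl h)
    · refine Or.inr (Or.inl ?_)
      rw [map_neg]; linarith
  · -- support
    ext x
    simp only [SetLike.mem_coe, hPmem, Set.mem_setOf_eq, map_neg]
    constructor
    · intro h
      exact ⟨Or.inr h, Or.inr (Infl.neg φ h)⟩
    · rintro ⟨hx | hx, hy | hy⟩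
      · have : φ x = 0 := le_antisymm (by linarith) hx
        rw [this]; exact Infl.zero φ
      · exact Infl.mono φ (by rw [abs_neg]) hy
      · exact hx
      · exact hx
  · -- strict inclusion
    rw [Set.ssubset_def]
    constructor
    · intro x hx
      rw [hα] at hx
      exact Or.inl hx
    · intro h
      have hmem : -b ∈ {x : A | 0 ≤ φ x ∨ Infl φ (φ x)} := by
        refine Or.inr ?_
        rw [map_neg]
        exact Infl.neg φ hMb
      have := h hmem
      rw [hα, Set.mem_setOf_eq, map_neg] at this
      linarith
end

section
/- Let A be a commutative ring, α a prime cone with φ_α : A → F_α and F_α Archimedean over φ_α(A). Then α is a closed point of Sper(A) in the spectral topology: any prime cone β ⊇ α equals α. -/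
/-- Let `α` be a prime cone of `A` given by a homomorphism `φ : A → F` into a real closed
field `F`, algebraic over the image of `φ` (the real closure of `Frac(A/supp α)`).
If `F` is Archimedean over `φ(A)` (every element of `F` is bounded above by an element of
`φ(A)`), then `α` is a closed point of the real spectrum: any prime cone containing `α`
equals `α`. -/
theorem stmt_10 {A F : Type*} [CommRing A] [Field F] [LinearOrder F] [IsStrictOrderedRing F]
    (hsq : ∀ x : F, 0 < x → ∃ y : F, y * y = x)
    (hodd : ∀ p : Polynomial F, Odd p.natDegree → ∃ x : F, p.eval x = 0)
    (φ : A →+* F)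
    (halg : ∀ z : F, ∃ p : Polynomial A, p.map φ ≠ 0 ∧ (p.map φ).eval z = 0)
    (α : PrimeCone A) (hα : α.carrier = {a : A | 0 ≤ φ a})
    (hArch : ∀ z : F, ∃ a : A, z ≤ φ a) :
    ∀ β : PrimeCone A, α.carrier ⊆ β.carrier → β.carrier = α.carrier := by
  intro β hsub
  apply Set.Subset.antisymm _ hsub
  intro b hb
  by_contra hbα
  rw [hα] at hbα
  simp only [Set.mem_setOf_eq, not_le] at hbα
  -- t := -b has φ t > 0 and lies in supp β
  set t : A := -b with ht
  have htφ : 0 < φ t := by simp [ht, map_neg]; linarith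
  have htα : t ∈ α.carrier := by rw [hα]; exact le_of_lt htφ
  have htβ : t ∈ β.carrier := hsub htα
  obtain ⟨P, hP, hPset⟩ := β.support_prime
  have htP : t ∈ P := by
    have : t ∈ (P : Set A) := by
      rw [hPset]; exact ⟨htβ, by simpa [ht] using hb⟩
    exact this
  -- Archimedean: get a with 1/φ t ≤ φ a
  obtain ⟨a, ha⟩ := hArch (φ t)⁻¹
  have h1 : (1 : F) ≤ φ t * φ a := by
    have h := (inv_le_iff_one_le_mul₀ htφ).mp ha
    linarith
  -- t*a - 1 ∈ α ⊆ β
  have h2 : t * a - 1 ∈ α.carrier := by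
    rw [hα]
    simp only [Set.mem_setOf_eq, map_sub, map_mul, map_one]
    linarith
  have h2β : t * a - 1 ∈ β.carrier := hsub h2
  -- -(t*a) ∈ β since t*a ∈ supp β
  have h3 : t * a ∈ P := Ideal.mul_mem_right a P htP
  have h3β : -(t * a) ∈ β.carrier := by
    have : t * a ∈ (P : Set A) := h3
    rw [hPset] at this
    exact this.2
  have : (-1 : A) ∈ β.carrier := by
    have h := β.add_mem _ h2β _ h3β
    have e : t * a - 1 + -(t * a) = (-1 : A) := by ring
    rwa [e] at h
  exact β.neg_one_not_mem this
end

section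
/- In the real spectrum Sper(A) of a commutative ring A with the spectral topology, the subspace of closed points is compact and Hausdorff. -/
/-- The spectral topology on the real spectrum `Sper(A)`, generated by the sets
`U(f) = {α : f(α) > 0}`, i.e. `{α : f ∈ α ∧ -f ∉ α}`;
its basic opens are the finite intersections `U(f₁,…,f_r)`. -/
instance sperTopology (A : Type*) [CommRing A] : TopologicalSpace (PrimeCone A) :=
  TopologicalSpace.generateFrom
    {U : Set (PrimeCone A) | ∃ f : A, U = {α : PrimeCone A | f ∈ α.carrier ∧ -f ∉ α.carrier}}

section Aux

variable {A : Type*} [CommRing A]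

theorem PrimeCone.ext' {α β : PrimeCone A} (h : α.carrier = β.carrier) : α = β := by
  cases α; cases β; cases h; rfl

theorem PrimeCone.prime_pw (α : PrimeCone A) {x y : A}
    (hxy : x * y ∈ α.carrier) (hxy' : -(x * y) ∈ α.carrier) :
    (x ∈ α.carrier ∧ -x ∈ α.carrier) ∨ (y ∈ α.carrier ∧ -y ∈ α.carrier) := by
  obtain ⟨P, hP, hPeq⟩ := α.support_prime
  have hm : x * y ∈ P := by
    show x * y ∈ (P : Set A); rw [hPeq]; exact ⟨hxy, hxy'⟩
  rcases hP.mem_or_mem hm with h | h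
  · left
    have : x ∈ (P : Set A) := h
    rwa [hPeq] at this
  · right
    have : y ∈ (P : Set A) := h
    rwa [hPeq] at this

/-- Build a prime cone from pointwise data. -/
def PrimeCone.mk' (c : Set A) (h1 : (-1 : A) ∉ c)
    (hadd : ∀ x ∈ c, ∀ y ∈ c, x + y ∈ c)
    (hmul : ∀ x ∈ c, ∀ y ∈ c, x * y ∈ c)
    (htot : ∀ x : A, x ∈ c ∨ -x ∈ c)
    (hpr : ∀ x y : A, x * y ∈ c → -(x * y) ∈ c →
      (x ∈ c ∧ -x ∈ c) ∨ (y ∈ c ∧ -y ∈ c)) :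
    PrimeCone A where
  carrier := c
  neg_one_not_mem := h1
  add_mem := hadd
  mul_mem := hmul
  total := htot
  support_prime := by
    have h0 : (0 : A) ∈ c := by
      rcases htot 0 with h | h
      · exact h
      · rwa [neg_zero] at h
    have hsm : ∀ a x : A, x ∈ c → -x ∈ c → a * x ∈ c ∧ -(a * x) ∈ c := by
      intro a x hx hx'
      rcases htot a with ha | ha
      · refine ⟨hmul a ha x hx, ?_⟩
        have := hmul a ha _ hx'
        simpa [mul_neg] using this
      · constructor
        · have := hmul _ ha _ hx'
          simpa [neg_mul_neg] using this
        · have := hmul _ ha _ hx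
          simpa [neg_mul] using this
    refine ⟨{ carrier := {x : A | x ∈ c ∧ -x ∈ c}
              zero_mem' := ⟨h0, by simpa using h0⟩
              add_mem' := ?_
              smul_mem' := ?_ }, ⟨?_, ?_⟩, rfl⟩
    · rintro a b ⟨ha, ha'⟩ ⟨hb, hb'⟩
      refine ⟨hadd _ ha _ hb, ?_⟩
      rw [neg_add]
      exact hadd _ ha' _ hb'
    · rintro a x ⟨hx, hx'⟩
      have := hsm a x hx hx'
      simpa [smul_eq_mul] using this
    · rw [Ideal.ne_top_iff_one]
      rintro ⟨-, h⟩
      exact h1 h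
    · rintro x y hxy
      exact hpr x y hxy.1 hxy.2

theorem PrimeCone.zero_mem (α : PrimeCone A) : (0 : A) ∈ α.carrier := by
  rcases α.total 0 with h | h
  · exact h
  · rwa [neg_zero] at h

/-- The basic open sets are open. -/
theorem isOpen_U (f : A) :
    IsOpen {α : PrimeCone A | f ∈ α.carrier ∧ -f ∉ α.carrier} :=
  TopologicalSpace.isOpen_generateFrom_of_mem ⟨f, rfl⟩

/-- The closure of a point is the set of prime cones containing it. -/
theorem sperClosureSingleton (α : PrimeCone A) :
    closure ({α} : Set (PrimeCone A)) = {β : PrimeCone A | α.carrier ⊆ β.carrier} := by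
  ext β
  constructor
  · intro hβ
    intro f hf
    by_contra hfβ
    have hnf : -f ∈ β.carrier := (β.total f).resolve_left hfβ
    have hβU : β ∈ {γ : PrimeCone A | -f ∈ γ.carrier ∧ -(-f) ∉ γ.carrier} := by
      refine ⟨hnf, ?_⟩; simpa using hfβ
    have := mem_closure_iff.mp hβ _ (isOpen_U (-f)) hβU
    obtain ⟨γ, hγ, hγα⟩ := this
    rcases hγα with rfl
    exact hγ.2 (by simpa using hf)
  · intro hsub
    rw [mem_closure_iff]
    intro o ho hβo
    refine ⟨α, ?_, rfl⟩
    -- every open set containing β contains α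
    induction ho with
    | basic U hU =>
      obtain ⟨f, rfl⟩ := hU
      obtain ⟨hfβ, hnfβ⟩ := hβo
      have hnfα : -f ∉ α.carrier := fun h => hnfβ (hsub h)
      have hfα : f ∈ α.carrier := (α.total f).resolve_right hnfα
      exact ⟨hfα, hnfα⟩
    | univ => trivial
    | inter U V hU hV ihU ihV => exact ⟨ihU hβo.1, ihV hβo.2⟩
    | sUnion S hS ih =>
      obtain ⟨U, hUS, hβU⟩ := hβo
      exact ⟨U, hUS, ih U hUS hβU⟩

theorem sperIsClosedSingletonIff (α : PrimeCone A) :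
    IsClosed ({α} : Set (PrimeCone A)) ↔ ∀ β : PrimeCone A, α.carrier ⊆ β.carrier → β = α := by
  constructor
  · intro h β hβ
    have : β ∈ closure ({α} : Set (PrimeCone A)) := by
      rw [sperClosureSingleton]; exact hβ
    rwa [h.closure_eq] at this
  · intro h
    have : closure ({α} : Set (PrimeCone A)) = {α} := by
      apply subset_antisymm
      · rw [sperClosureSingleton]
        intro β hβ
        exact h β hβ
      · exact subset_closure
    rw [← this]; exact isClosed_closure

/-- Every prime cone specializes to a closed point. -/
theorem exists_closed_spec (α : PrimeCone A) :
    ∃ β : PrimeCone A, α.carrier ⊆ β.carrier ∧ IsClosed ({β} : Set (PrimeCone A)) := by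
  set S : Set (Set A) := {c | (∃ β : PrimeCone A, β.carrier = c) ∧ α.carrier ⊆ c} with hS
  have hzorn : ∀ C ⊆ S, IsChain (· ⊆ ·) C → C.Nonempty → ∃ ub ∈ S, ∀ s ∈ C, s ⊆ ub := by
    intro C hCS hchain ⟨c0, hc0⟩
    obtain ⟨⟨β0, hβ0⟩, hαc0⟩ := hCS hc0
    -- the union of the chain
    refine ⟨⋃₀ C, ⟨?_, fun x hx => ⟨c0, hc0, hαc0 hx⟩⟩, fun s hs x hx => ⟨s, hs, hx⟩⟩
    · -- build a prime cone with carrier ⋃₀ C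
      have key : ∀ x ∈ ⋃₀ C, ∀ y ∈ ⋃₀ C, ∃ c ∈ C, x ∈ c ∧ y ∈ c := by
        rintro x ⟨cx, hcx, hxcx⟩ y ⟨cy, hcy, hycy⟩
        rcases hchain.total hcx hcy with h | h
        · exact ⟨cy, hcy, h hxcx, hycy⟩
        · exact ⟨cx, hcx, hxcx, h hycy⟩
      refine ⟨PrimeCone.mk' (⋃₀ C) ?_ ?_ ?_ ?_ ?_, rfl⟩
      · rintro ⟨c, hc, h1c⟩
        obtain ⟨⟨β, rfl⟩, -⟩ := hCS hc
        exact β.neg_one_not_mem h1c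
      · intro x hx y hy
        obtain ⟨c, hc, hxc, hyc⟩ := key x hx y hy
        obtain ⟨⟨β, rfl⟩, -⟩ := hCS hc
        exact ⟨_, hc, β.add_mem x hxc y hyc⟩
      · intro x hx y hy
        obtain ⟨c, hc, hxc, hyc⟩ := key x hx y hy
        obtain ⟨⟨β, rfl⟩, -⟩ := hCS hc
        exact ⟨_, hc, β.mul_mem x hxc y hyc⟩
      · intro x
        rcases β0.total x with h | h
        · exact Or.inl ⟨c0, hc0, hβ0 ▸ h⟩
        · exact Or.inr ⟨c0, hc0, hβ0 ▸ h⟩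
      · intro x y hxy hxy'
        obtain ⟨c, hc, hxc, hyc⟩ := key _ hxy _ hxy'
        obtain ⟨⟨β, rfl⟩, -⟩ := hCS hc
        rcases β.prime_pw hxc hyc with ⟨h1, h2⟩ | ⟨h1, h2⟩
        · exact Or.inl ⟨⟨_, hc, h1⟩, ⟨_, hc, h2⟩⟩
        · exact Or.inr ⟨⟨_, hc, h1⟩, ⟨_, hc, h2⟩⟩
  obtain ⟨m, hm, hmax⟩ := zorn_subset_nonempty S hzorn α.carrier ⟨⟨α, rfl⟩, subset_rfl⟩
  obtain ⟨⟨β, hβ⟩, hαm⟩ := hmax.prop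
  refine ⟨β, hβ ▸ hαm, ?_⟩
  rw [sperIsClosedSingletonIff]
  intro γ hγ
  have hγS : γ.carrier ∈ S := ⟨⟨γ, rfl⟩, hαm.trans (hβ ▸ hγ)⟩
  have heq : γ.carrier = m := hmax.eq_of_ge hγS (hβ ▸ hγ)
  exact PrimeCone.ext' (heq.trans hβ.symm)

/-- `Sper A` is compact. -/
theorem compactSpace_sper : CompactSpace (PrimeCone A) := by
  constructor
  rw [isCompact_iff_ultrafilter_le_nhds]
  intro F _
  -- the limit prime cone
  set c : Set A := {x : A | {α : PrimeCone A | x ∈ α.carrier} ∈ F} with hc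
  have hmem : ∀ x : A, x ∈ c ↔ {α : PrimeCone A | x ∈ α.carrier} ∈ F := fun x => Iff.rfl
  have h1 : (-1 : A) ∉ c := by
    intro h
    rw [hmem] at h
    have : {α : PrimeCone A | (-1 : A) ∈ α.carrier} = ∅ := by
      ext α; simp [α.neg_one_not_mem]
    rw [this] at h
    exact F.toFilter.empty_notMem h
  have hadd : ∀ x ∈ c, ∀ y ∈ c, x + y ∈ c := by
    intro x hx y hy
    rw [hmem] at *
    exact Filter.mem_of_superset (Filter.inter_mem hx hy)
      (fun α ⟨h1, h2⟩ => α.add_mem x h1 y h2)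
  have hmul : ∀ x ∈ c, ∀ y ∈ c, x * y ∈ c := by
    intro x hx y hy
    rw [hmem] at *
    exact Filter.mem_of_superset (Filter.inter_mem hx hy)
      (fun α ⟨h1, h2⟩ => α.mul_mem x h1 y h2)
  have htot : ∀ x : A, x ∈ c ∨ -x ∈ c := by
    intro x
    rw [hmem, hmem, ← Ultrafilter.union_mem_iff]
    apply Filter.mem_of_superset Filter.univ_mem
    intro α _
    exact α.total x
  have hpr : ∀ x y : A, x * y ∈ c → -(x * y) ∈ c →
      (x ∈ c ∧ -x ∈ c) ∨ (y ∈ c ∧ -y ∈ c) := by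
    intro x y hxy hxy'
    rw [hmem] at hxy hxy'
    have hsub : {α : PrimeCone A | x * y ∈ α.carrier} ∩ {α | -(x * y) ∈ α.carrier} ⊆
        ({α : PrimeCone A | x ∈ α.carrier} ∩ {α | -x ∈ α.carrier}) ∪
        ({α : PrimeCone A | y ∈ α.carrier} ∩ {α | -y ∈ α.carrier}) := by
      rintro α ⟨h1, h2⟩
      rcases α.prime_pw h1 h2 with h | h
      · exact Or.inl h
      · exact Or.inr h
    have hmem2 : ({α : PrimeCone A | x ∈ α.carrier} ∩ {α | -x ∈ α.carrier}) ∪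
        ({α : PrimeCone A | y ∈ α.carrier} ∩ {α | -y ∈ α.carrier}) ∈ F :=
      Filter.mem_of_superset (Filter.inter_mem hxy hxy') hsub
    rcases Ultrafilter.union_mem_iff.mp hmem2 with h | h
    · exact Or.inl ⟨(F.toFilter.sets_of_superset h (Set.inter_subset_left)),
        (F.toFilter.sets_of_superset h (Set.inter_subset_right))⟩
    · exact Or.inr ⟨(F.toFilter.sets_of_superset h (Set.inter_subset_left)),
        (F.toFilter.sets_of_superset h (Set.inter_subset_right))⟩
  set β := PrimeCone.mk' c h1 hadd hmul htot hpr with hβ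
  refine ⟨β, Set.mem_univ _, ?_⟩
  rw [le_nhds_iff]
  intro s hβs hs
  induction hs with
  | basic U hU =>
    obtain ⟨f, rfl⟩ := hU
    obtain ⟨hfβ, hnfβ⟩ := hβs
    have hfc : {α : PrimeCone A | f ∈ α.carrier} ∈ F := hfβ
    have hnfc : -f ∉ c := hnfβ
    have hcompl : {α : PrimeCone A | -f ∈ α.carrier}ᶜ ∈ F :=
      Ultrafilter.compl_mem_iff_notMem.mpr hnfc
    exact Filter.mem_of_superset (Filter.inter_mem hfc hcompl) (fun α ⟨ha, hb⟩ => ⟨ha, hb⟩)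
  | univ => exact Filter.univ_mem
  | inter U V hU hV ihU ihV =>
    exact Filter.inter_mem (ihU hβs.1) (ihV hβs.2)
  | sUnion S hS ih =>
    obtain ⟨U, hUS, hβU⟩ := hβs
    exact Filter.mem_of_superset (ih U hUS hβU) (fun γ hγ => ⟨U, hUS, hγ⟩)

end Aux

/-- In the real spectrum of a commutative ring, with the spectral topology, the subspace
of closed points is compact and Hausdorff. -/
theorem stmt_11 {A : Type*} [CommRing A] :
    CompactSpace {α : PrimeCone A // IsClosed ({α} : Set (PrimeCone A))} ∧
    T2Space {α : PrimeCone A // IsClosed ({α} : Set (PrimeCone A))} := by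
  have hcs : CompactSpace (PrimeCone A) := compactSpace_sper
  constructor
  · -- compactness
    have hK : IsCompact {α : PrimeCone A | IsClosed ({α} : Set (PrimeCone A))} := by
      rw [isCompact_iff_finite_subcover]
      intro ι U hU hcov
      have huniv : (Set.univ : Set (PrimeCone A)) ⊆ ⋃ i, U i := by
        intro α _
        obtain ⟨β, hαβ, hβcl⟩ := exists_closed_spec α
        have hβmem : β ∈ {α : PrimeCone A | IsClosed ({α} : Set (PrimeCone A))} := hβcl
        obtain ⟨_, ⟨i, rfl⟩, hβU⟩ := hcov hβmem
        have hβspec : β ∈ closure ({α} : Set (PrimeCone A)) := by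
          rw [sperClosureSingleton]; exact hαβ
        obtain ⟨γ, hγ, hγα⟩ := mem_closure_iff.mp hβspec _ (hU i) hβU
        rcases hγα with rfl
        exact Set.mem_iUnion.mpr ⟨i, hγ⟩
      obtain ⟨t, ht⟩ := hcs.isCompact_univ.elim_finite_subcover U hU huniv
      exact ⟨t, fun α hα => ht (Set.mem_univ α)⟩
    exact isCompact_iff_compactSpace.mp hK
  · -- Hausdorff
    constructor
    rintro ⟨β, hβ⟩ ⟨γ, hγ⟩ hne
    have hβγ : β ≠ γ := fun h => hne (by simpa using h)
    rw [sperIsClosedSingletonIff] at hβ hγ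
    -- neither is contained in the other
    have h1 : ¬ β.carrier ⊆ γ.carrier := fun h => hβγ (hβ γ h).symm
    have h2 : ¬ γ.carrier ⊆ β.carrier := fun h => hβγ (hγ β h)
    obtain ⟨f, hfβ, hfγ⟩ := Set.not_subset.mp h1
    obtain ⟨g, hgγ, hgβ⟩ := Set.not_subset.mp h2
    have hnfγ : -f ∈ γ.carrier := (γ.total f).resolve_left hfγ
    have hngβ : -g ∈ β.carrier := (β.total g).resolve_left hgβ
    set h : A := f + -g with hh
    have hhβ : h ∈ β.carrier := β.add_mem f hfβ _ hngβ
    have hnhγ : -h ∈ γ.carrier := by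
      have : -h = g + -f := by ring
      rw [this]
      exact γ.add_mem g hgγ _ hnfγ
    have hhγ : h ∉ γ.carrier := by
      intro hmem
      have : f = h + g := by ring
      exact hfγ (this ▸ γ.add_mem h hmem g hgγ)
    have hnhβ : -h ∉ β.carrier := by
      intro hmem
      have : g = -h + f := by ring
      exact hgβ (this ▸ β.add_mem _ hmem f hfβ)
    refine ⟨Subtype.val ⁻¹' {α : PrimeCone A | h ∈ α.carrier ∧ -h ∉ α.carrier},
      Subtype.val ⁻¹' {α : PrimeCone A | -h ∈ α.carrier ∧ -(-h) ∉ α.carrier},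
      (isOpen_U h).preimage continuous_subtype_val,
      (isOpen_U (-h)).preimage continuous_subtype_val,
      ⟨hhβ, hnhβ⟩, ⟨hnhγ, by simpa using hhγ⟩, ?_⟩
    exact Set.disjoint_left.mpr (fun {x} hx1 hx2 => hx1.2 hx2.1)
end

section
/- For every g ∈ SL(n, ℝ), if μ₁ ≥ … ≥ μ_n > 0 denote the eigenvalues of g·gᵀ and d(g) := sqrt(Σᵢ (log μᵢ)²), then tr(g·gᵀ)/n ≤ e^{d(g)} ≤ tr(g·gᵀ)^{2(n−1)}. -/
/-- For `g ∈ SL(n, ℝ)`, if `μ₁ ≥ … ≥ μ_n > 0` are the eigenvalues of `g * gᵀ` and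
`d(g) = sqrt (Σᵢ (log μᵢ)²)`, then `tr(g gᵀ)/n ≤ e^{d(g)} ≤ tr(g gᵀ)^{2(n-1)}`. -/
theorem stmt_13 {n : ℕ} (g : Matrix (Fin n) (Fin n) ℝ) (hg : g.det = 1)
    (μ : Fin n → ℝ) (hpos : ∀ i, 0 < μ i) (hmono : Antitone μ)
    (hdiag : ∃ P : Matrix (Fin n) (Fin n) ℝ, IsUnit P ∧
      g * g.transpose = P * Matrix.diagonal μ * P⁻¹) :
    Matrix.trace (g * g.transpose) / n ≤
      Real.exp (Real.sqrt (∑ i, Real.log (μ i) ^ 2)) ∧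
    Real.exp (Real.sqrt (∑ i, Real.log (μ i) ^ 2)) ≤
      Matrix.trace (g * g.transpose) ^ (2 * (n - 1)) := by
  obtain ⟨P, hP, hPD⟩ := hdiag
  have hprod : ∏ i, μ i = 1 := by
    have h1 : (g * g.transpose).det = 1 := by
      rw [Matrix.det_mul, Matrix.det_transpose, hg, mul_one]
    rwa [hPD, Matrix.det_conj hP, Matrix.det_diagonal] at h1
  have htr : Matrix.trace (g * g.transpose) = ∑ i, μ i := by
    rw [hPD, Matrix.trace_mul_comm, ← Matrix.mul_assoc,
      Matrix.nonsing_inv_mul _ ((Matrix.isUnit_iff_isUnit_det P).mp hP),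
      Matrix.one_mul, Matrix.trace_diagonal]
  rcases Nat.eq_zero_or_pos n with hn | hn
  · subst hn
    simp [htr]
  -- main case n ≥ 1
  set t : ℝ := ∑ i, μ i with ht
  set d : ℝ := Real.sqrt (∑ i, Real.log (μ i) ^ 2) with hd
  set i0 : Fin n := ⟨0, hn⟩ with hi0
  have hle0 : ∀ i, μ i ≤ μ i0 := fun i => hmono (by simp [hi0, Fin.le_def])
  have hμ0 : 1 ≤ μ i0 := by
    by_contra h
    push_neg at h
    have : ∏ i, μ i < 1 := by
      calc ∏ i, μ i ≤ ∏ _i : Fin n, μ i0 :=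
            Finset.prod_le_prod (fun i _ => (hpos i).le) (fun i _ => hle0 i)
        _ = μ i0 ^ n := by rw [Finset.prod_const, Finset.card_univ, Fintype.card_fin]
        _ < 1 := pow_lt_one₀ (hpos i0).le h hn.ne'
    rw [hprod] at this; exact absurd this (lt_irrefl 1)
  have hμle_t : ∀ i, μ i ≤ t :=
    fun i => Finset.single_le_sum (fun j _ => (hpos j).le) (Finset.mem_univ i)
  have ht1 : 1 ≤ t := le_trans hμ0 (hμle_t i0)
  have htpos : 0 < t := lt_of_lt_of_le one_pos ht1
  constructor
  · -- first inequality
    rw [htr]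
    have h1 : t ≤ n * μ i0 := by
      calc t ≤ ∑ _i : Fin n, μ i0 := Finset.sum_le_sum (fun i _ => hle0 i)
        _ = n * μ i0 := by rw [Finset.sum_const, Finset.card_univ, Fintype.card_fin]; simp
    have h2 : t / n ≤ μ i0 := by
      rw [div_le_iff₀ (by exact_mod_cast hn)]
      linarith [h1]
    refine le_trans h2 ?_
    have h3 : Real.log (μ i0) ≤ d := by
      rw [hd]
      have : Real.log (μ i0) = Real.sqrt (Real.log (μ i0) ^ 2) := by
        rw [Real.sqrt_sq (Real.log_nonneg hμ0)]
      rw [this]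
      exact Real.sqrt_le_sqrt (Finset.single_le_sum (f := fun j => Real.log (μ j) ^ 2)
        (fun j _ => sq_nonneg _) (Finset.mem_univ i0))
    calc μ i0 = Real.exp (Real.log (μ i0)) := (Real.exp_log (hpos i0)).symm
      _ ≤ Real.exp d := Real.exp_le_exp.mpr h3
  · -- second inequality
    rw [htr]
    have hsum0 : ∑ i, Real.log (μ i) = 0 := by
      rw [← Real.log_prod (fun i _ => (hpos i).ne'), hprod, Real.log_one]
    have hdle : d ≤ ∑ i, |Real.log (μ i)| := by
      rw [hd]
      have h1 : ∑ i, Real.log (μ i) ^ 2 ≤ (∑ i, |Real.log (μ i)|) ^ 2 := by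
        calc ∑ i, Real.log (μ i) ^ 2 = ∑ i, |Real.log (μ i)| ^ 2 := by
              simp [sq_abs]
          _ ≤ (∑ i, |Real.log (μ i)|) ^ 2 :=
              Finset.sum_sq_le_sq_sum_of_nonneg (fun i _ => abs_nonneg _)
      calc Real.sqrt (∑ i, Real.log (μ i) ^ 2) ≤ Real.sqrt ((∑ i, |Real.log (μ i)|) ^ 2) :=
            Real.sqrt_le_sqrt h1
        _ = ∑ i, |Real.log (μ i)| :=
            Real.sqrt_sq (Finset.sum_nonneg (fun i _ => abs_nonneg _))
    have habs : ∑ i, |Real.log (μ i)| = 2 * ∑ i, max (Real.log (μ i)) 0 := by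
      have : ∀ i : Fin n, |Real.log (μ i)| = 2 * max (Real.log (μ i)) 0 - Real.log (μ i) := by
        intro i
        rcases le_or_gt 0 (Real.log (μ i)) with h | h
        · rw [abs_of_nonneg h, max_eq_left h]; ring
        · rw [abs_of_neg h, max_eq_right h.le]; ring
      rw [Finset.sum_congr rfl (fun i _ => this i), Finset.sum_sub_distrib, hsum0,
        ← Finset.mul_sum]
      ring
    -- last eigenvalue is ≤ 1
    set ilast : Fin n := ⟨n - 1, Nat.sub_lt hn one_pos⟩ with hil
    have hge_last : ∀ i, μ ilast ≤ μ i := by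
      intro i
      refine hmono ?_
      simp only [Fin.le_def, hil]
      omega
    have hlast1 : μ ilast ≤ 1 := by
      by_contra h
      push_neg at h
      have : (1:ℝ) < ∏ i, μ i := by
        calc (1:ℝ) < μ ilast ^ n := one_lt_pow₀ h hn.ne'
          _ = ∏ _i : Fin n, μ ilast := by
              rw [Finset.prod_const, Finset.card_univ, Fintype.card_fin]
          _ ≤ ∏ i, μ i :=
              Finset.prod_le_prod (fun i _ => (hpos ilast).le) (fun i _ => hge_last i)
      rw [hprod] at this; exact absurd this (lt_irrefl 1)
    have hlogt : 0 ≤ Real.log t := Real.log_nonneg ht1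
    have hmaxsum : ∑ i, max (Real.log (μ i)) 0 ≤ (n - 1 : ℕ) * Real.log t := by
      rw [← Finset.sum_erase_add _ _ (Finset.mem_univ ilast)]
      have hlast0 : max (Real.log (μ ilast)) 0 = 0 :=
        max_eq_right (Real.log_nonpos (hpos ilast).le hlast1)
      rw [hlast0, add_zero]
      calc ∑ i ∈ Finset.univ.erase ilast, max (Real.log (μ i)) 0
          ≤ ∑ _i ∈ Finset.univ.erase ilast, Real.log t := by
            refine Finset.sum_le_sum (fun i _ => ?_)
            exact max_le (Real.log_le_log (hpos i) (hμle_t i)) hlogt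
        _ = (n - 1 : ℕ) * Real.log t := by
            rw [Finset.sum_const, Finset.card_erase_of_mem (Finset.mem_univ ilast),
              Finset.card_univ, Fintype.card_fin]
            simp
    have hdfin : d ≤ (2 * (n - 1) : ℕ) * Real.log t := by
      calc d ≤ ∑ i, |Real.log (μ i)| := hdle
        _ = 2 * ∑ i, max (Real.log (μ i)) 0 := habs
        _ ≤ 2 * ((n - 1 : ℕ) * Real.log t) := by
            have := hmaxsum; linarith
        _ = (2 * (n - 1) : ℕ) * Real.log t := by push_cast; ring
    calc Real.exp d ≤ Real.exp ((2 * (n - 1) : ℕ) * Real.log t) := Real.exp_le_exp.mpr hdfin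
      _ = Real.exp (Real.log t) ^ (2 * (n - 1)) := Real.exp_nat_mul _ _
      _ = t ^ (2 * (n - 1)) := by rw [Real.exp_log htpos]
end

section
/- Let ω be a nonprincipal ultrafilter on ℕ and K an ordered field. If μ ∈ K^ω is a positive infinite element (μ > n for every natural number n), then O_μ := {x ∈ K^ω : |x| < μ^m for some m ∈ ℤ} is an order convex subring of K^ω, and I_μ := {x ∈ K^ω : |x| < μ^m for all m ∈ ℤ} is an order convex maximal ideal of O_μ. -/
theorem general {G : Type*} [Field G] [LinearOrder G] [IsStrictOrderedRing G] (μ : G) (h2 : (2:G) < μ) :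
    ∃ O : Subring G,
      (O : Set G) = {x | ∃ m : ℤ, |x| < μ ^ m} ∧
      (∀ x y : G, 0 ≤ x → x ≤ y → y ∈ O → x ∈ O) ∧
      ∃ I : Ideal O,
        (∀ x : O, x ∈ I ↔ ∀ m : ℤ, |(x : G)| < μ ^ m) ∧
        I.IsMaximal ∧
        (∀ x y : O, 0 ≤ (x : G) → (x : G) ≤ (y : G) → y ∈ I → x ∈ I) := by
  have h1 : (1:G) < μ := lt_trans one_lt_two h2
  have h0 : (0:G) < μ := lt_trans two_pos h2
  have hpow : ∀ m : ℤ, 0 < μ ^ m := fun m => zpow_pos h0 m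
  have hmono : ∀ {a b : ℤ}, a ≤ b → μ ^ a ≤ μ ^ b := fun hab =>
    zpow_le_zpow_right₀ h1.le hab
  refine ⟨{
    carrier := {x | ∃ m : ℤ, |x| < μ ^ m}
    one_mem' := ⟨1, by simpa using h1⟩
    zero_mem' := ⟨0, by simpa using one_pos⟩
    neg_mem' := by rintro x ⟨m, hm⟩; exact ⟨m, by simpa using hm⟩
    mul_mem' := by
      rintro x y ⟨a, ha⟩ ⟨b, hb⟩
      refine ⟨a + b, ?_⟩
      rw [abs_mul, zpow_add₀ h0.ne']
      exact mul_lt_mul'' ha hb (abs_nonneg _) (abs_nonneg _)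
    add_mem' := by
      rintro x y ⟨a, ha⟩ ⟨b, hb⟩
      refine ⟨max a b + 1, ?_⟩
      calc |x + y| ≤ |x| + |y| := abs_add_le _ _
        _ < μ ^ a + μ ^ b := add_lt_add ha hb
        _ ≤ μ ^ max a b + μ ^ max a b :=
            add_le_add (hmono (le_max_left _ _)) (hmono (le_max_right _ _))
        _ = 2 * μ ^ max a b := (two_mul _).symm
        _ < μ * μ ^ max a b := by
            exact mul_lt_mul_of_pos_right h2 (hpow _)
        _ = μ ^ (max a b + 1) := by
            rw [zpow_add₀ h0.ne', zpow_one, mul_comm]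
  }, rfl, ?_, ?_⟩
  · rintro x y hx hxy ⟨m, hm⟩
    refine ⟨m, lt_of_le_of_lt ?_ hm⟩
    calc |x| = x := abs_of_nonneg hx
      _ ≤ y := hxy
      _ ≤ |y| := le_abs_self _
  · refine ⟨{
      carrier := {x | ∀ m : ℤ, |(x : G)| < μ ^ m}
      zero_mem' := fun m => by simpa using hpow m
      add_mem' := by
        intro x y hx hy m
        calc |((x + y : _) : G)| ≤ |(x:G)| + |(y:G)| := abs_add_le _ _
          _ < μ ^ (m - 1) + μ ^ (m - 1) := add_lt_add (hx _) (hy _)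
          _ = 2 * μ ^ (m - 1) := (two_mul _).symm
          _ < μ * μ ^ (m - 1) := mul_lt_mul_of_pos_right h2 (hpow _)
          _ = μ ^ m := by
              rw [← zpow_one_add₀ h0.ne']; congr 1; ring
      smul_mem' := by
        rintro ⟨c, a, ha⟩ x hx m
        have : |(c • (x:G))| = |c| * |(x:G)| := by
          rw [smul_eq_mul, abs_mul]
        show |(c * (x:G))| < μ ^ m
        rw [abs_mul]
        calc |c| * |(x:G)| < μ ^ a * μ ^ (m - a) :=
              mul_lt_mul'' ha (hx _) (abs_nonneg _) (abs_nonneg _)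
          _ = μ ^ m := by rw [← zpow_add₀ h0.ne']; ring_nf
    }, fun x => Iff.rfl, ?_, ?_⟩
    · rw [Ideal.isMaximal_iff]
      constructor
      · intro h
        have := h 0
        simp at this
      · rintro J x _ hxI hxJ
        simp only [Submodule.mem_mk, AddSubmonoid.mem_mk, AddSubsemigroup.mem_mk,
          Set.mem_setOf_eq, not_forall, not_lt] at hxI
        obtain ⟨m, hm⟩ := hxI
        have hx0 : (x : G) ≠ 0 := by
          intro h
          rw [h, abs_zero] at hm
          exact absurd hm (not_le.mpr (hpow m))
        have hinv : |(x : G)⁻¹| < μ ^ (-m + 1) := by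
          rw [abs_inv]
          calc |(x:G)|⁻¹ ≤ (μ ^ m)⁻¹ :=
                inv_anti₀ (hpow m) hm
            _ = μ ^ (-m) := by rw [← zpow_neg]
            _ < μ ^ (-m + 1) := zpow_lt_zpow_right₀ h1 (by omega)
        have hxinv : ∃ k : ℤ, |(x:G)⁻¹| < μ ^ k := ⟨-m + 1, hinv⟩
        have hmem := J.mul_mem_left ⟨(x:G)⁻¹, hxinv⟩ hxJ
        have heq : (⟨(x:G)⁻¹, hxinv⟩ * x : _) = 1 := Subtype.ext (inv_mul_cancel₀ hx0)
        rw [heq] at hmem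
        exact hmem
    · rintro x y hx hxy hyI m
      calc |(x:G)| = x := abs_of_nonneg hx
        _ ≤ y := hxy
        _ ≤ |(y:G)| := le_abs_self _
        _ < μ ^ m := hyI m


/-- Let `ω` be a nonprincipal ultrafilter on `ℕ` and `K` an ordered field.  If `μ ∈ K^ω` is
a positive infinite element (`μ > n` for every natural number `n`), then
`O_μ = {x : |x| < μ^m for some m ∈ ℤ}` is an order convex subring of `K^ω`, and
`I_μ = {x : |x| < μ^m for all m ∈ ℤ}` is an order convex maximal ideal of `O_μ`. -/
theorem stmt_18 {K : Type*} [Field K] [LinearOrder K] [IsStrictOrderedRing K] (ω : Ultrafilter ℕ)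
    (hω : ∀ a : ℕ, ω ≠ pure a)
    (μ : Filter.Germ (ω : Filter ℕ) K)
    (hμ : ∀ n : ℕ, (n : Filter.Germ (ω : Filter ℕ) K) < μ) :
    ∃ O : Subring (Filter.Germ (ω : Filter ℕ) K),
      (O : Set (Filter.Germ (ω : Filter ℕ) K)) = {x | ∃ m : ℤ, |x| < μ ^ m} ∧
      (∀ x y : Filter.Germ (ω : Filter ℕ) K, 0 ≤ x → x ≤ y → y ∈ O → x ∈ O) ∧
      ∃ I : Ideal O,
        (∀ x : O, x ∈ I ↔ ∀ m : ℤ, |(x : Filter.Germ (ω : Filter ℕ) K)| < μ ^ m) ∧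
        I.IsMaximal ∧
        (∀ x y : O, 0 ≤ (x : Filter.Germ (ω : Filter ℕ) K) →
          (x : Filter.Germ (ω : Filter ℕ) K) ≤ (y : Filter.Germ (ω : Filter ℕ) K) →
          y ∈ I → x ∈ I) := by
  have h2 : (2 : Filter.Germ (ω : Filter ℕ) K) < μ := by exact_mod_cast hμ 2
  exact general μ h2
end

section
/- Let K ⊆ ℝ be a field and ω a nonprincipal ultrafilter on ℕ, μ = [(μ_k)] a positive infinite element of K^ω with μ_k → ∞. Then the function v : (K^ω_μ)^* → ℝ defined on the Robinson field K^ω_μ = O_μ/I_μ by v([x]) = −lim_ω (log |x_k| / log μ_k) is a well-defined, surjective-onto-its-image group homomorphism from the multiplicative group to (ℝ, +) satisfying v(x+y) ≥ min(v(x), v(y)); i.e. it is a non-Archimedean valuation on the Robinson field. -/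
open Filter

private noncomputable abbrev glog (K : Subfield ℝ) (μseq : ℕ → K) (f : ℕ → K) : ℕ → ℝ :=
  fun k => Real.log |(f k : ℝ)| / Real.log (μseq k : ℝ)

set_option maxHeartbeats 1000000 in
set_option synthInstance.maxHeartbeats 200000 in
/-- Let `K ⊆ ℝ` be a field, `ω` a nonprincipal ultrafilter on `ℕ`, and
`μ = [(μ_k)] ∈ K^ω` a positive infinite element with `μ_k → ∞`.  Let `O = O_μ` and
`I = I_μ` be as usual, so that the Robinson field is `K^ω_μ = O ⧸ I`.  Then the function
`v([x]) = - lim_ω (log |x_k| / log μ_k)` is a well-defined group homomorphism from the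
multiplicative group of nonzero elements of the Robinson field to `(ℝ, +)` satisfying the
ultrametric inequality `v(x + y) ≥ min (v x) (v y)`; i.e. it is a non-Archimedean
valuation on the Robinson field. -/
theorem stmt_19 (K : Subfield ℝ) (ω : Ultrafilter ℕ) (hω : ∀ a : ℕ, ω ≠ pure a)
    (μseq : ℕ → K)
    (hμto : Filter.Tendsto (fun k => (μseq k : ℝ)) Filter.atTop Filter.atTop)
    (hμinf : ∀ n : ℕ,
      (n : Filter.Germ (ω : Filter ℕ) K) < (↑μseq : Filter.Germ (ω : Filter ℕ) K))
    (O : Subring (Filter.Germ (ω : Filter ℕ) K))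
    (hO : (O : Set (Filter.Germ (ω : Filter ℕ) K)) =
      {x | ∃ m : ℤ, |x| < (↑μseq : Filter.Germ (ω : Filter ℕ) K) ^ m})
    (I : Ideal O) (hImax : I.IsMaximal)
    (hI : ∀ x : O, x ∈ I ↔ ∀ m : ℤ,
      |(x : Filter.Germ (ω : Filter ℕ) K)| < (↑μseq : Filter.Germ (ω : Filter ℕ) K) ^ m) :
    ∃ v : (O ⧸ I) → ℝ,
      (∀ (f : ℕ → K) (hf : (↑f : Filter.Germ (ω : Filter ℕ) K) ∈ O),
        Ideal.Quotient.mk I ⟨(↑f : Filter.Germ (ω : Filter ℕ) K), hf⟩ ≠ 0 →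
        Filter.Tendsto (fun k : ℕ => Real.log |(f k : ℝ)| / Real.log (μseq k : ℝ))
          (ω : Filter ℕ)
          (nhds (-(v (Ideal.Quotient.mk I ⟨(↑f : Filter.Germ (ω : Filter ℕ) K), hf⟩))))) ∧
      (∀ x y : O ⧸ I, x ≠ 0 → y ≠ 0 → v (x * y) = v x + v y) ∧
      (∀ x y : O ⧸ I, x ≠ 0 → y ≠ 0 → x + y ≠ 0 → min (v x) (v y) ≤ v (x + y)) := by
  classical
  haveI := hImax
  have habsK : ∀ a : K, ((|a| : K) : ℝ) = |(a : ℝ)| := by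
    intro a
    rcases abs_cases a with ⟨h1, h2⟩ | ⟨h1, h2⟩
    · rw [h1, abs_of_nonneg (by exact_mod_cast h2)]
    · rw [h1, abs_of_neg (by exact_mod_cast h2)]; push_cast; ring
  have hzpowK : ∀ (a : K) (m : ℤ), ((a ^ m : K) : ℝ) = (a : ℝ) ^ m := fun a m =>
    map_zpow₀ K.subtype a m
  have hcof : (ω : Filter ℕ) ≤ Filter.cofinite := by
    rcases ω.le_cofinite_or_eq_pure with h | ⟨a, ha⟩
    · exact h
    · exact absurd ha (hω a)
  have hatTop : (ω : Filter ℕ) ≤ Filter.atTop := by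
    rw [← Nat.cofinite_eq_atTop]; exact hcof
  have hμω : Tendsto (fun k => (μseq k : ℝ)) (ω : Filter ℕ) atTop := hμto.mono_left hatTop
  have hlogμ : Tendsto (fun k => Real.log (μseq k : ℝ)) (ω : Filter ℕ) atTop :=
    Real.tendsto_log_atTop.comp hμω
  have hlog1 : ∀ᶠ k in (ω : Filter ℕ), 1 ≤ Real.log (μseq k : ℝ) :=
    hlogμ.eventually_ge_atTop 1
  have hμ2 : ∀ᶠ k in (ω : Filter ℕ), 2 ≤ (μseq k : ℝ) := hμω.eventually_ge_atTop 2
  have hinvlog : Tendsto (fun k => Real.log 2 / Real.log (μseq k : ℝ)) (ω : Filter ℕ) (nhds 0) :=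
    tendsto_const_nhds.div_atTop hlogμ
  -- translation lemmas from germ inequalities to eventual real inequalities
  have habsg : ∀ f : ℕ → K,
      |(↑f : Filter.Germ (ω : Filter ℕ) K)| = (↑(fun k => |f k|) : Filter.Germ (ω : Filter ℕ) K) := by
    intro f
    rw [Filter.Germ.abs_def, Filter.Germ.map_coe]; rfl
  have hzpowg : ∀ m : ℤ, (↑μseq : Filter.Germ (ω : Filter ℕ) K) ^ m =
      (↑(fun k => μseq k ^ m) : Filter.Germ (ω : Filter ℕ) K) := fun _ => rfl
  have key_lt : ∀ (f : ℕ → K) (m : ℤ),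
      |(↑f : Filter.Germ (ω : Filter ℕ) K)| < (↑μseq : Filter.Germ (ω : Filter ℕ) K) ^ m →
      ∀ᶠ k in (ω : Filter ℕ), |(f k : ℝ)| < (μseq k : ℝ) ^ m := by
    intro f m h
    rw [habsg, hzpowg, Filter.Germ.coe_lt] at h
    filter_upwards [h] with k hk
    rw [← habsK, ← hzpowK]
    exact_mod_cast hk
  have key_le : ∀ (f : ℕ → K) (m : ℤ),
      (↑μseq : Filter.Germ (ω : Filter ℕ) K) ^ m ≤ |(↑f : Filter.Germ (ω : Filter ℕ) K)| →
      ∀ᶠ k in (ω : Filter ℕ), (μseq k : ℝ) ^ m ≤ |(f k : ℝ)| := by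
    intro f m h
    rw [habsg, hzpowg, Filter.Germ.coe_le] at h
    filter_upwards [h] with k hk
    rw [← habsK, ← hzpowK]
    exact_mod_cast hk
  have hupper : ∀ f : ℕ → K, (↑f : Filter.Germ (ω : Filter ℕ) K) ∈ O →
      ∃ m : ℤ, ∀ᶠ k in (ω : Filter ℕ), |(f k : ℝ)| < (μseq k : ℝ) ^ m := by
    intro f hf
    have h : (↑f : Filter.Germ (ω : Filter ℕ) K) ∈
        {x | ∃ m : ℤ, |x| < (↑μseq : Filter.Germ (ω : Filter ℕ) K) ^ m} := hO ▸ hf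
    obtain ⟨m, hm⟩ := h
    exact ⟨m, key_lt f m hm⟩
  have hlower : ∀ (f : ℕ → K) (hf : (↑f : Filter.Germ (ω : Filter ℕ) K) ∈ O),
      (⟨↑f, hf⟩ : O) ∉ I →
      ∃ m : ℤ, ∀ᶠ k in (ω : Filter ℕ), (μseq k : ℝ) ^ m ≤ |(f k : ℝ)| := by
    intro f hf hni
    rw [hI] at hni
    push_neg at hni
    obtain ⟨m, hm⟩ := hni
    exact ⟨m, key_le f m hm⟩
  have hposOf : ∀ (f : ℕ → K) (hf : (↑f : Filter.Germ (ω : Filter ℕ) K) ∈ O),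
      (⟨↑f, hf⟩ : O) ∉ I → ∀ᶠ k in (ω : Filter ℕ), 0 < |(f k : ℝ)| := by
    intro f hf hni
    obtain ⟨m, hm⟩ := hlower f hf hni
    filter_upwards [hm, hμ2] with k h1 h2
    exact lt_of_lt_of_le (zpow_pos (by linarith) m) h1
  -- existence of the ultralimit for a representative not in I
  have hlim : ∀ (f : ℕ → K) (hf : (↑f : Filter.Germ (ω : Filter ℕ) K) ∈ O),
      (⟨↑f, hf⟩ : O) ∉ I →
      ∃ c : ℝ, Tendsto (glog K μseq f) (ω : Filter ℕ) (nhds c) := by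
    intro f hf hni
    obtain ⟨m1, hm1⟩ := hupper f hf
    obtain ⟨m0, hm0⟩ := hlower f hf hni
    have hIcc : ∀ᶠ k in (ω : Filter ℕ), glog K μseq f k ∈ Set.Icc (m0 : ℝ) (m1 : ℝ) := by
      filter_upwards [hm0, hm1, hlog1, hμ2] with k h0 h1 hl h2
      have hμpos : (0 : ℝ) < (μseq k : ℝ) := by linarith
      have hlogpos : (0 : ℝ) < Real.log (μseq k : ℝ) := by linarith
      have hapos : 0 < |(f k : ℝ)| := lt_of_lt_of_le (zpow_pos hμpos m0) h0
      constructor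
      · rw [le_div_iff₀ hlogpos]
        have := Real.log_le_log (zpow_pos hμpos m0) h0
        rwa [Real.log_zpow] at this
      · rw [div_le_iff₀ hlogpos]
        have := Real.log_le_log hapos h1.le
        rwa [Real.log_zpow] at this
    have hmem : ↑(Ultrafilter.map (glog K μseq f) ω) ≤
        Filter.principal (Set.Icc (m0 : ℝ) (m1 : ℝ)) := by
      rw [Ultrafilter.coe_map, Filter.le_principal_iff, Filter.mem_map]
      exact hIcc
    obtain ⟨c, -, hc⟩ := (isCompact_Icc).ultrafilter_le_nhds _ hmem
    rw [Ultrafilter.coe_map] at hc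
    exact ⟨c, hc⟩
  -- well-definedness
  have hWD : ∀ (f f' : ℕ → K) (hf : (↑f : Filter.Germ (ω : Filter ℕ) K) ∈ O)
      (hf' : (↑f' : Filter.Germ (ω : Filter ℕ) K) ∈ O),
      Ideal.Quotient.mk I ⟨↑f, hf⟩ = Ideal.Quotient.mk I ⟨↑f', hf'⟩ →
      (⟨↑f, hf⟩ : O) ∉ I → ∀ c : ℝ,
      Tendsto (glog K μseq f) (ω : Filter ℕ) (nhds c) →
      Tendsto (glog K μseq f') (ω : Filter ℕ) (nhds c) := by
    intro f f' hf hf' hmk hni c hc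
    obtain ⟨m0, hm0⟩ := hlower f hf hni
    have hdmem : (⟨↑f, hf⟩ : O) - ⟨↑f', hf'⟩ ∈ I := Ideal.Quotient.eq.mp hmk
    have hdle : ∀ᶠ k in (ω : Filter ℕ),
        |(f k : ℝ) - (f' k : ℝ)| < (μseq k : ℝ) ^ (m0 - 1) := by
      have h := (hI _).mp hdmem (m0 - 1)
      have hcoe : (((⟨↑f, hf⟩ : O) - ⟨↑f', hf'⟩ : O) : Filter.Germ (ω : Filter ℕ) K) =
          (↑(fun k => f k - f' k) : Filter.Germ (ω : Filter ℕ) K) := rfl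
      rw [hcoe] at h
      filter_upwards [key_lt (fun k => f k - f' k) (m0 - 1) h] with k hk
      have : ((f k - f' k : K) : ℝ) = (f k : ℝ) - (f' k : ℝ) := by push_cast; ring
      rwa [this] at hk
    have hbound : ∀ᶠ k in (ω : Filter ℕ),
        ‖glog K μseq f' k - glog K μseq f k‖ ≤ Real.log 2 / Real.log (μseq k : ℝ) := by
      filter_upwards [hm0, hdle, hμ2, hlog1] with k h0 hd h2 hl
      have hμpos : (0 : ℝ) < (μseq k : ℝ) := by linarith
      have hlogpos : (0 : ℝ) < Real.log (μseq k : ℝ) := by linarith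
      have hapos : 0 < |(f k : ℝ)| := lt_of_lt_of_le (zpow_pos hμpos m0) h0
      have hzz : (μseq k : ℝ) ^ (m0 - 1) * (μseq k : ℝ) = (μseq k : ℝ) ^ m0 := by
        rw [← zpow_add_one₀ (ne_of_gt hμpos), sub_add_cancel]
      have hzpos : (0 : ℝ) < (μseq k : ℝ) ^ (m0 - 1) := zpow_pos hμpos _
      have h1 : (μseq k : ℝ) ^ (m0 - 1) * 2 ≤ (μseq k : ℝ) ^ m0 := by nlinarith
      have hdsmall : |(f k : ℝ) - (f' k : ℝ)| ≤ |(f k : ℝ)| / 2 := by linarith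
      have hb_up : |(f' k : ℝ)| ≤ 2 * |(f k : ℝ)| := by
        have h3 := abs_sub_abs_le_abs_sub (f' k : ℝ) (f k : ℝ)
        rw [abs_sub_comm] at h3
        linarith
      have hb_lo : |(f k : ℝ)| / 2 ≤ |(f' k : ℝ)| := by
        have h3 := abs_sub_abs_le_abs_sub (f k : ℝ) (f' k : ℝ)
        linarith
      have hbpos : 0 < |(f' k : ℝ)| := by linarith
      have hlog_up : Real.log |(f' k : ℝ)| ≤ Real.log |(f k : ℝ)| + Real.log 2 := by
        have h4 : Real.log |(f' k : ℝ)| ≤ Real.log (2 * |(f k : ℝ)|) :=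
          Real.log_le_log hbpos (by linarith)
        rw [Real.log_mul two_ne_zero (ne_of_gt hapos)] at h4
        linarith
      have hlog_lo : Real.log |(f k : ℝ)| - Real.log 2 ≤ Real.log |(f' k : ℝ)| := by
        have h4 : Real.log (|(f k : ℝ)| / 2) ≤ Real.log |(f' k : ℝ)| :=
          Real.log_le_log (by positivity) hb_lo
        rw [Real.log_div (ne_of_gt hapos) two_ne_zero] at h4
        linarith
      have hdiffeq : glog K μseq f' k - glog K μseq f k =
          (Real.log |(f' k : ℝ)| - Real.log |(f k : ℝ)|) / Real.log (μseq k : ℝ) := by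
        simp only [glog]
        rw [div_sub_div_same]
      rw [Real.norm_eq_abs, hdiffeq, abs_div, abs_of_pos hlogpos]
      gcongr
      exact abs_le.2 ⟨by linarith, by linarith⟩
    have hdiff : Tendsto (fun k => glog K μseq f' k - glog K μseq f k) (ω : Filter ℕ)
        (nhds 0) := squeeze_zero_norm' hbound hinvlog
    have := hdiff.add hc
    simpa using this
  -- representatives
  have hrep : ∀ q : O ⧸ I, ∃ (f : ℕ → K) (hf : (↑f : Filter.Germ (ω : Filter ℕ) K) ∈ O),
      Ideal.Quotient.mk I ⟨↑f, hf⟩ = q := by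
    intro q
    obtain ⟨x, hx⟩ := Ideal.Quotient.mk_surjective q
    obtain ⟨xg, hxg⟩ := x
    obtain ⟨f, rfl⟩ : ∃ f : ℕ → K, (↑f : Filter.Germ (ω : Filter ℕ) K) = xg :=
      Filter.Germ.inductionOn xg fun f => ⟨f, rfl⟩
    exact ⟨f, hxg, hx⟩
  have hnotmem : ∀ (q : O ⧸ I) (f : ℕ → K) (hf : (↑f : Filter.Germ (ω : Filter ℕ) K) ∈ O),
      Ideal.Quotient.mk I ⟨↑f, hf⟩ = q → q ≠ 0 → (⟨↑f, hf⟩ : O) ∉ I := by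
    intro q f hf hfq hq h
    exact hq (hfq ▸ (Ideal.Quotient.eq_zero_iff_mem.2 h))
  have hexists : ∀ q : O ⧸ I, q ≠ 0 →
      ∃ c : ℝ, ∀ (f : ℕ → K) (hf : (↑f : Filter.Germ (ω : Filter ℕ) K) ∈ O),
        Ideal.Quotient.mk I ⟨↑f, hf⟩ = q →
        Tendsto (glog K μseq f) (ω : Filter ℕ) (nhds c) := by
    intro q hq
    obtain ⟨f0, hf0, hq0⟩ := hrep q
    have hni0 : (⟨↑f0, hf0⟩ : O) ∉ I := hnotmem q f0 hf0 hq0 hq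
    obtain ⟨c, hc⟩ := hlim f0 hf0 hni0
    exact ⟨c, fun f hf hfq => hWD f0 f hf0 hf (hq0.trans hfq.symm) hni0 c hc⟩
  set v : (O ⧸ I) → ℝ :=
    fun q => if h : q ≠ 0 then -Classical.choose (hexists q h) else 0 with hvdef
  have hv : ∀ (q : O ⧸ I) (hq : q ≠ 0) (f : ℕ → K)
      (hf : (↑f : Filter.Germ (ω : Filter ℕ) K) ∈ O),
      Ideal.Quotient.mk I ⟨↑f, hf⟩ = q →
      Tendsto (glog K μseq f) (ω : Filter ℕ) (nhds (-(v q))) := by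
    intro q hq f hf hfq
    have hvq : v q = -Classical.choose (hexists q hq) := by
      simp only [hvdef]; exact dif_pos hq
    rw [hvq, neg_neg]
    exact Classical.choose_spec (hexists q hq) f hf hfq
  refine ⟨v, ?_, ?_, ?_⟩
  · intro f hf hne
    exact hv _ hne f hf rfl
  · -- multiplicativity
    intro x y hx hy
    have hxy : x * y ≠ 0 := mul_ne_zero hx hy
    obtain ⟨f, hfO, hfq⟩ := hrep x
    obtain ⟨f', hf'O, hf'q⟩ := hrep y
    have hniF : (⟨↑f, hfO⟩ : O) ∉ I := hnotmem x f hfO hfq hx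
    have hniF' : (⟨↑f', hf'O⟩ : O) ∉ I := hnotmem y f' hf'O hf'q hy
    have hfpO : (↑(fun k => f k * f' k) : Filter.Germ (ω : Filter ℕ) K) ∈ O := by
      have h : (↑(fun k => f k * f' k) : Filter.Germ (ω : Filter ℕ) K) =
          (↑f : Filter.Germ (ω : Filter ℕ) K) * ↑f' := rfl
      rw [h]; exact mul_mem hfO hf'O
    have hmkp : Ideal.Quotient.mk I ⟨↑(fun k => f k * f' k), hfpO⟩ = x * y := by
      rw [show (⟨↑(fun k => f k * f' k), hfpO⟩ : O) = ⟨↑f, hfO⟩ * ⟨↑f', hf'O⟩ from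
        Subtype.ext rfl, map_mul, hfq, hf'q]
    have ht1 := hv x hx f hfO hfq
    have ht2 := hv y hy f' hf'O hf'q
    have ht3 := hv (x * y) hxy _ hfpO hmkp
    have heq : ∀ᶠ k in (ω : Filter ℕ),
        glog K μseq (fun k => f k * f' k) k = glog K μseq f k + glog K μseq f' k := by
      filter_upwards [hposOf f hfO hniF, hposOf f' hf'O hniF'] with k h1 h2
      have hc : ((f k * f' k : K) : ℝ) = (f k : ℝ) * (f' k : ℝ) := by push_cast; ring
      simp only [glog, hc, abs_mul]
      rw [Real.log_mul (ne_of_gt h1) (ne_of_gt h2), add_div]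
    have hsum : Tendsto (glog K μseq (fun k => f k * f' k)) (ω : Filter ℕ)
        (nhds (-(v x) + -(v y))) :=
      Filter.Tendsto.congr' (heq.mono fun k h => h.symm) (ht1.add ht2)
    have huniq := tendsto_nhds_unique ht3 hsum
    linarith
  · -- ultrametric inequality
    intro x y hx hy hxy
    obtain ⟨f, hfO, hfq⟩ := hrep x
    obtain ⟨f', hf'O, hf'q⟩ := hrep y
    have hniF : (⟨↑f, hfO⟩ : O) ∉ I := hnotmem x f hfO hfq hx
    have hniF' : (⟨↑f', hf'O⟩ : O) ∉ I := hnotmem y f' hf'O hf'q hy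
    have hfsO : (↑(fun k => f k + f' k) : Filter.Germ (ω : Filter ℕ) K) ∈ O := by
      have h : (↑(fun k => f k + f' k) : Filter.Germ (ω : Filter ℕ) K) =
          (↑f : Filter.Germ (ω : Filter ℕ) K) + ↑f' := rfl
      rw [h]; exact add_mem hfO hf'O
    have hmks : Ideal.Quotient.mk I ⟨↑(fun k => f k + f' k), hfsO⟩ = x + y := by
      rw [show (⟨↑(fun k => f k + f' k), hfsO⟩ : O) = ⟨↑f, hfO⟩ + ⟨↑f', hf'O⟩ from
        Subtype.ext rfl, map_add, hfq, hf'q]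
    have hniS : (⟨↑(fun k => f k + f' k), hfsO⟩ : O) ∉ I := hnotmem _ _ hfsO hmks hxy
    have ht1 := hv x hx f hfO hfq
    have ht2 := hv y hy f' hf'O hf'q
    have ht3 := hv (x + y) hxy _ hfsO hmks
    have hineq : ∀ᶠ k in (ω : Filter ℕ),
        glog K μseq (fun k => f k + f' k) k ≤
          Real.log 2 / Real.log (μseq k : ℝ) + max (glog K μseq f k) (glog K μseq f' k) := by
      filter_upwards [hposOf f hfO hniF, hposOf f' hf'O hniF',
        hposOf _ hfsO hniS, hlog1] with k ha hb hs hl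
      have hlogpos : (0 : ℝ) < Real.log (μseq k : ℝ) := by linarith
      have hcast : ((f k + f' k : K) : ℝ) = (f k : ℝ) + (f' k : ℝ) := by push_cast; ring
      have hmax : 0 < max |(f k : ℝ)| |(f' k : ℝ)| := lt_max_of_lt_left ha
      have h2m : |((f k + f' k : K) : ℝ)| ≤ 2 * max |(f k : ℝ)| |(f' k : ℝ)| := by
        rw [hcast]
        refine (abs_add_le _ _).trans ?_
        rw [two_mul]
        exact add_le_add (le_max_left _ _) (le_max_right _ _)
      have hls : Real.log |((f k + f' k : K) : ℝ)| ≤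
          Real.log 2 + max (Real.log |(f k : ℝ)|) (Real.log |(f' k : ℝ)|) := by
        calc Real.log |((f k + f' k : K) : ℝ)|
            ≤ Real.log (2 * max |(f k : ℝ)| |(f' k : ℝ)|) := Real.log_le_log hs h2m
          _ = Real.log 2 + Real.log (max |(f k : ℝ)| |(f' k : ℝ)|) :=
            Real.log_mul two_ne_zero (ne_of_gt hmax)
          _ = Real.log 2 + max (Real.log |(f k : ℝ)|) (Real.log |(f' k : ℝ)|) := by
            rcases le_total |(f k : ℝ)| |(f' k : ℝ)| with h | h
            · rw [max_eq_right h, max_eq_right (Real.log_le_log ha h)]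
            · rw [max_eq_left h, max_eq_left (Real.log_le_log hb h)]
      show Real.log |((f k + f' k : K) : ℝ)| / Real.log (μseq k : ℝ) ≤
        Real.log 2 / Real.log (μseq k : ℝ) +
          max (Real.log |(f k : ℝ)| / Real.log (μseq k : ℝ))
            (Real.log |(f' k : ℝ)| / Real.log (μseq k : ℝ))
      rw [max_div_div_right hlogpos.le, ← add_div]
      gcongr
    have hrhs : Tendsto (fun k => Real.log 2 / Real.log (μseq k : ℝ) +
        max (glog K μseq f k) (glog K μseq f' k)) (ω : Filter ℕ)
        (nhds (0 + max (-(v x)) (-(v y)))) := hinvlog.add (ht1.max ht2)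
    have hle := le_of_tendsto_of_tendsto ht3 hrhs hineq
    have hmn : max (-(v x)) (-(v y)) = -(min (v x) (v y)) := max_neg_neg _ _
    rw [hmn] at hle
    linarith
end
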